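/- arXiv:2009.03418 — 4 statements merged into one kernel-verified Lean document; each statement's English description precedes it below -/
import Mathlib

section
/- Let W be a 2-dimensional linear subspace of ℝ³ and let u be a nonzero vector orthogonal to W. Let q, r ∈ S² with r ∉ {q, −q}. If ⟨u,q⟩ > 0 and ⟨u,r⟩ < 0 (i.e. q and r lie strictly on opposite sides of the plane W), then arc(q,r) ∩ W consists of exactly one point, which lies on the great circle W ∩ S². -/
open Set
open scoped RealInnerProductSpace

noncomputable section

/-- Three-dimensional Euclidean space. -/
abbrev E3 : Type := EuclideanSpace ℝ (Fin 3)

/-- The unit sphere `S²` in `ℝ³`. -/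
def unitSphere : Set E3 := {x | ‖x‖ = 1}

/-- The geodesic arc from `p` to `q`: the radial projection onto the sphere of the
straight segment from `p` to `q`. -/
def arc (p q : E3) : Set E3 :=
  {x | ∃ t ∈ Icc (0 : ℝ) 1, x = ‖(1 - t) • p + t • q‖⁻¹ • ((1 - t) • p + t • q)}

/-- The half-circle with endpoints `p` and `-p` determined by a direction `v`. -/
def halfCircle (p v : E3) : Set E3 :=
  {x | ∃ t ∈ Icc (0 : ℝ) Real.pi, x = Real.cos t • p + Real.sin t • v}

/-- A set of points is in general position if every three distinct points of it are
linearly independent. -/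
def GenPos (P : Set E3) : Prop :=
  ∀ a ∈ P, ∀ b ∈ P, ∀ c ∈ P, a ≠ b → a ≠ c → b ≠ c → LinearIndependent ℝ ![a, b, c]

/-- `P̂ = P ∪ (-P)`: the set `P` together with the antipodes of its points. -/
def phat (P : Set E3) : Set E3 := P ∪ (fun x => -x) '' P

/-- The edges of a vertex set `V`: unordered pairs `{a, b}` of points of `V`
with `b ∉ {a, -a}`. -/
def edges (V : Set E3) : Set (Sym2 E3) :=
  {e | ∃ a b, a ∈ V ∧ b ∈ V ∧ b ≠ a ∧ b ≠ -a ∧ e = s(a, b)}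

/-- A curve of a drawing: a subset of the sphere together with its set of endpoints. -/
abbrev Curve : Type := Set E3 × Set E3

/-- The curves of the drawing determined by `P`: the geodesic arcs `arc a b` for all
edges `{a, b}` of `P̂`, together with the half-circles `halfCircle p (v p)` joining
`p` and `-p` for `p ∈ P'`. -/
def drawingCurves (P : Set E3) (v : E3 → E3) (P' : Set E3) : Set Curve :=
  {c | (∃ a b, a ∈ phat P ∧ b ∈ phat P ∧ b ≠ a ∧ b ≠ -a ∧
          c = (arc a b, ({a, b} : Set E3))) ∨
       (∃ p ∈ P', c = (halfCircle p (v p), ({p, -p} : Set E3)))}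

/-- The crossing pairs of a drawing: unordered pairs of distinct curves sharing a point
that is not an endpoint of either curve. -/
def crossingPairs (D : Set Curve) : Set (Sym2 Curve) :=
  {pr | ∃ c ∈ D, ∃ d ∈ D, c ≠ d ∧
    (∃ x, x ∈ c.1 ∧ x ∈ d.1 ∧ x ∉ c.2 ∧ x ∉ d.2) ∧ pr = s(c, d)}

/-- Hill's number `H(n)` as a rational number. -/
def Hfun (n : ℕ) : ℚ :=
  (1 / 4 : ℚ) * ((n / 2 : ℕ) : ℚ) * (((n - 1) / 2 : ℕ) : ℚ) *
    (((n - 2) / 2 : ℕ) : ℚ) * (((n - 3) / 2 : ℕ) : ℚ)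


theorem arc_opposite_sides_crosses_plane_once
    (W : Submodule ℝ E3) (hW : Module.finrank ℝ W = 2)
    (u : E3) (hu : u ≠ 0) (huW : ∀ w ∈ W, ⟪u, w⟫ = 0)
    (q r : E3) (hq : q ∈ unitSphere) (hr : r ∈ unitSphere)
    (hrq : r ≠ q) (hrnq : r ≠ -q)
    (hq' : 0 < ⟪u, q⟫) (hr' : ⟪u, r⟫ < 0) :
    ∃ x, x ∈ (W : Set E3) ∩ unitSphere ∧ arc q r ∩ (W : Set E3) = {x} := by
  -- W is exactly the kernel of ⟪u, ·⟫
  have hspan : (ℝ ∙ u) = Wᗮ := by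
    apply Submodule.eq_of_le_of_finrank_eq
    · rw [Submodule.span_singleton_le_iff_mem, Submodule.mem_orthogonal]
      intro v hv; rw [real_inner_comm]; exact huW v hv
    · have h3 : Module.finrank ℝ E3 = 3 := by simp [finrank_euclideanSpace]
      have := Submodule.finrank_add_finrank_orthogonal (K := W)
      rw [hW, h3] at this
      rw [finrank_span_singleton hu]; omega
  have hWiff : ∀ x : E3, x ∈ W ↔ ⟪u, x⟫ = 0 := by
    intro x
    constructor
    · exact huW x
    · intro hx
      have : x ∈ (ℝ ∙ u)ᗮ := by
        rw [Submodule.mem_orthogonal_singleton_iff_inner_left]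
        rwa [real_inner_comm]
      rwa [hspan, Submodule.orthogonal_orthogonal] at this
  have hinner : ∀ t : ℝ, ⟪u, (1 - t) • q + t • r⟫ = (1 - t) * ⟪u, q⟫ + t * ⟪u, r⟫ := by
    intro t
    rw [inner_add_right, real_inner_smul_right, real_inner_smul_right]
  have hc : ∀ t ∈ Icc (0 : ℝ) 1, (1 - t) • q + t • r ≠ 0 := by
    intro t ht h0
    rcases eq_or_lt_of_le ht.1 with h0t | h0t
    · simp [← h0t] at h0
      norm_num [unitSphere, h0] at hq
    rcases eq_or_lt_of_le ht.2 with h1t | h1t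
    · rw [h1t] at h0; simp at h0
      norm_num [unitSphere, h0] at hr
    -- (1-t) • q = -(t • r), norms equal
    have hqr : (1 - t) • q = -(t • r) := by linear_combination (norm := module) h0
    have hnorm : (1 - t) * ‖q‖ = t * ‖r‖ := by
      have := congrArg norm hqr
      rwa [norm_smul, norm_neg, norm_smul, Real.norm_of_nonneg (by linarith),
        Real.norm_of_nonneg (by linarith)] at this
    have hq1 : ‖q‖ = 1 := hq
    have hr1 : ‖r‖ = 1 := hr
    rw [hq1, hr1, mul_one, mul_one] at hnorm
    have ht2 : t = 1/2 := by linarith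
    rw [ht2] at hqr
    apply hrnq
    have : q = -r := by
      have h2 : (2:ℝ) • ((1 - 1/2 : ℝ) • q) = (2:ℝ) • (-((1/2:ℝ) • r)) := by rw [hqr]
      norm_num at h2
      linear_combination (norm := module) h2
    rw [this]; module
  set a := ⟪u, q⟫ with ha
  set b := ⟪u, r⟫ with hb
  have hab : 0 < a - b := by linarith
  set t₀ : ℝ := a / (a - b) with ht₀
  have ht₀mem : t₀ ∈ Icc (0:ℝ) 1 := by
    constructor
    · positivity
    · rw [div_le_one hab]; linarith
  set c₀ : E3 := (1 - t₀) • q + t₀ • r with hc₀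
  have hc₀ne : c₀ ≠ 0 := hc t₀ ht₀mem
  have hinner₀ : ⟪u, c₀⟫ = 0 := by
    rw [hc₀, hinner, ht₀]
    field_simp
    ring
  set x₀ : E3 := ‖c₀‖⁻¹ • c₀ with hx₀
  have hx₀W : x₀ ∈ W := by
    rw [hWiff, hx₀, real_inner_smul_right, hinner₀, mul_zero]
  refine ⟨x₀, ⟨hx₀W, ?_⟩, ?_⟩
  · show ‖x₀‖ = 1
    rw [hx₀, norm_smul, norm_inv, norm_norm, inv_mul_cancel₀ (norm_ne_zero_iff.2 hc₀ne)]
  · ext y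
    constructor
    · rintro ⟨⟨t, htmem, rfl⟩, hyW⟩
      have hcne := hc t htmem
      have h0 : ⟪u, (1 - t) • q + t • r⟫ = 0 := by
        have := (hWiff _).1 hyW
        rw [real_inner_smul_right] at this
        rcases mul_eq_zero.1 this with h | h
        · exact absurd h (inv_ne_zero (norm_ne_zero_iff.2 hcne))
        · exact h
      rw [hinner] at h0
      have htt : t = t₀ := by
        rw [ht₀]; field_simp; linarith
      simp [htt, Set.mem_singleton_iff, hx₀, hc₀]
    · rintro rfl
      exact ⟨⟨t₀, ht₀mem, rfl⟩, hx₀W⟩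

end
end

section
/- Let k ≥ 3 and let P ⊆ S² be a set of k points in general position, and put P̂ = P ∪ (−P). Then the number of unordered pairs {e, f} of distinct edges of P̂, say e = {a,b} and f = {c,d}, such that arc(a,b) ∩ arc(c,d) contains a point not belonging to {a,b,c,d}, equals (1/4)·k(k−1)(k−2)(k−3). -/
open Set
open scoped RealInnerProductSpace

noncomputable section

/-!
Write the endpoints of two crossing edges of `P̂` as `±p, ±q` and `±r, ±s` with `p, q, r, s ∈ P`,
and the crossing point as `x = α p + β q = γ r + η s`: all four coefficients are nonzero and
carry the signs of the endpoints. If `{p, q}` and `{r, s}` meet, general position forces the two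
edges to coincide. Otherwise `p, q, r, s` are distinct, their linear relations form a line
spanned by the coefficients of `(p × q) × (r × s)`, and so the ordered quadruple `(p, q, r, s)`
determines the crossing pair up to the antipodal map; conversely every ordered quadruple of
distinct points yields a crossing. Reading the quadruple as a quadrilateral whose diagonals
carry the two edges, its four rotations give the same crossing pair and its reflections the
antipodal one, so each crossing pair comes from exactly `4` of the `k (k - 1) (k - 2) (k - 3)`
ordered quadruples.
-/

open SignType (sign)

lemma LinearIndependent.eq_zero_of_smul_add_smul_add_smul_eq_zero {R M : Type*} [Ring R]
    [AddCommGroup M] [Module R M] {a b c : M} (h : LinearIndependent R ![a, b, c]) {A B C : R}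
    (hs : A • a + B • b + C • c = 0) : A = 0 ∧ B = 0 ∧ C = 0 := by
  have := Fintype.linearIndependent_iff.1 h ![A, B, C] (by simpa [Fin.sum_univ_three] using hs)
  exact ⟨this 0, this 1, this 2⟩

lemma exists_mem_ne_ne_of_three_le_ncard {α : Type*} {s : Set α} (hs : 3 ≤ s.ncard) (a b : α) :
    ∃ c ∈ s, c ≠ a ∧ c ≠ b := by
  have hab : ({a, b} : Set α).ncard < s.ncard :=
    (ncard_insert_le a {b}).trans_lt (by rw [ncard_singleton]; omega)
  obtain ⟨c, hc, hcab⟩ := exists_mem_notMem_of_ncard_lt_ncard hab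
  exact ⟨c, hc, fun h => hcab (by simp [h]), fun h => hcab (by simp [h])⟩

lemma card_eq_ncard_range_mul {α β : Type*} [Finite α] (f : α → β) {n : ℕ}
    (h : ∀ a, {a' | f a' = f a}.ncard = n) : Nat.card α = (range f).ncard * n := by
  classical
  have := Fintype.ofFinite α
  rw [Nat.card_eq_fintype_card, ← Finset.card_univ, Finset.card_eq_sum_card_image f,
    ← image_univ, ← Finset.coe_univ, ← Finset.coe_image, ncard_coe_finset]
  refine Finset.sum_const_nat fun b hb => ?_
  obtain ⟨a, -, rfl⟩ := Finset.mem_image.1 hb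
  rw [← h a, ← ncard_coe_finset]
  congr 1
  ext
  simp

lemma exists_eq_add_or_eq_neg_add_of_diagonals_eq {α : Type*} {f g : Fin 4 → α}
    (h : s(s(g 0, g 2), s(g 1, g 3)) = s(s(f 0, f 2), s(f 1, f 3))) :
    ∃ i, (∀ j, g j = f (j + i)) ∨ ∀ j, g j = f (-j + i) := by
  simp only [Sym2.eq_iff] at h
  rcases h with ⟨⟨h0, h2⟩ | ⟨h0, h2⟩, ⟨h1, h3⟩ | ⟨h1, h3⟩⟩ |
    ⟨⟨h0, h2⟩ | ⟨h0, h2⟩, ⟨h1, h3⟩ | ⟨h1, h3⟩⟩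
  · exact ⟨0, .inl fun j => by fin_cases j <;> simp [*]⟩
  · exact ⟨0, .inr fun j => by fin_cases j <;> simp [*] <;> rfl⟩
  · exact ⟨2, .inr fun j => by fin_cases j <;> simp [*] <;> rfl⟩
  · exact ⟨2, .inl fun j => by fin_cases j <;> simp [*]⟩
  · exact ⟨1, .inr fun j => by fin_cases j <;> simp [*] <;> rfl⟩
  · exact ⟨1, .inl fun j => by fin_cases j <;> simp [*]⟩
  · exact ⟨3, .inl fun j => by fin_cases j <;> simp [*]⟩
  · exact ⟨3, .inr fun j => by fin_cases j <;> simp [*] <;> rfl⟩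

lemma sign_cast_ne_zero {x : ℝ} (hx : x ≠ 0) : (sign x : ℝ) ≠ 0 := by
  rcases hx.lt_or_gt with h | h
  · simp [sign_neg h]
  · simp [sign_pos h]

def det3 (a b c : E3) : ℝ := Matrix.det !![a 0, a 1, a 2; b 0, b 1, b 2; c 0, c 1, c 2]

lemma det3_eq (a b c : E3) : det3 a b c =
    a 0 * b 1 * c 2 - a 0 * b 2 * c 1 - a 1 * b 0 * c 2 + a 1 * b 2 * c 0 + a 2 * b 0 * c 1 -
      a 2 * b 1 * c 0 :=
  Matrix.det_fin_three _

lemma det3_ne_zero {a b c : E3} (h : LinearIndependent ℝ ![a, b, c]) : det3 a b c ≠ 0 := by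
  have hrows : LinearIndependent ℝ (!![a 0, a 1, a 2; b 0, b 1, b 2; c 0, c 1, c 2]).row := by
    convert h.map' (WithLp.linearEquiv 2 ℝ (Fin 3 → ℝ)).toLinearMap (LinearEquiv.ker _) using 1
    · ext i j; fin_cases i <;> fin_cases j <;> rfl
    all_goals rfl
  rw [Matrix.linearIndependent_rows_iff_isUnit, Matrix.isUnit_iff_isUnit_det] at hrows
  exact hrows.ne_zero

lemma det3_swap (a b c : E3) : det3 b a c = -det3 a b c := by
  simp only [det3_eq]; ring

lemma det3_swap₂₃ (a b c : E3) : det3 a c b = -det3 a b c := by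
  simp only [det3_eq]; ring

lemma det3_rotate (a b c : E3) : det3 b c a = det3 a b c := by
  simp only [det3_eq]; ring

/-- Both sides are `(p × q) × (r × s)`. -/
lemma det3_smul_add_eq (p q r s : E3) :
    (-det3 q r s) • p + det3 p r s • q = det3 p q s • r + (-det3 p q r) • s := by
  ext i
  fin_cases i <;> simp [det3_eq] <;> ring

lemma exists_eq_mul_det3_of_smul_add_eq {p q r s : E3} (h : LinearIndependent ℝ ![q, r, s])
    {α β γ η : ℝ} (he : α • p + β • q = γ • r + η • s) :
    ∃ c, α = c * -det3 q r s ∧ β = c * det3 p r s ∧ γ = c * det3 p q s ∧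
      η = c * -det3 p q r := by
  have hD := det3_ne_zero h
  set c := -α / det3 q r s
  have hα : α = c * -det3 q r s := by simp only [c]; field_simp
  have hrel : (β - c * det3 p r s) • q + (c * det3 p q s - γ) • r +
      (c * -det3 p q r - η) • s = 0 := by
    rw [hα] at he
    linear_combination (norm := module) he - c • det3_smul_add_eq p q r s
  obtain ⟨h1, h2, h3⟩ := h.eq_zero_of_smul_add_smul_add_smul_eq_zero hrel
  exact ⟨c, hα, by linarith, by linarith, by linarith⟩

lemma smul_add_mem_arc {a b : E3} {u v : ℝ} (hu : 0 ≤ u) (hv : 0 ≤ v)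
    (hn : ‖u • a + v • b‖ = 1) : u • a + v • b ∈ arc a b := by
  have huv : 0 < u + v := by
    rcases hu.eq_or_lt with rfl | hu
    · rcases hv.eq_or_lt with rfl | hv
      · simp at hn
      · simpa
    · positivity
  refine ⟨v / (u + v), ⟨by positivity, (div_le_one huv).2 (by linarith)⟩, ?_⟩
  have hw : (1 - v / (u + v)) • a + (v / (u + v)) • b = (u + v)⁻¹ • (u • a + v • b) := by
    match_scalars <;> field_simp; ring
  rw [hw, norm_smul, hn, mul_one, norm_inv, Real.norm_of_nonneg huv.le, inv_inv, smul_smul,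
    mul_inv_cancel₀ huv.ne', one_smul]

lemma exists_pos_smul_add_of_mem_arc {a b x : E3} (ha : ‖a‖ = 1) (hb : ‖b‖ = 1)
    (hab : b ≠ -a) (hx : x ∈ arc a b) (hxa : x ≠ a) (hxb : x ≠ b) :
    ∃ u v : ℝ, 0 < u ∧ 0 < v ∧ x = u • a + v • b := by
  obtain ⟨t, ⟨ht0, ht1⟩, rfl⟩ := hx
  have ht0' : 0 < t := ht0.lt_of_ne fun h => hxa (by simp [← h, ha])
  have ht1' : t < 1 := ht1.lt_of_ne fun h => hxb (by simp [h, hb])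
  have hw : (1 - t) • a + t • b ≠ 0 := by
    intro hw
    have hnorm : ‖(1 - t) • a‖ = ‖t • b‖ := by rw [eq_neg_of_add_eq_zero_left hw, norm_neg]
    rw [norm_smul, norm_smul, ha, hb, Real.norm_of_nonneg (by linarith),
      Real.norm_of_nonneg ht0] at hnorm
    have ht : t = 1 / 2 := by linarith
    subst ht
    exact hab (by linear_combination (norm := module) 2 • hw)
  have hn : 0 < ‖(1 - t) • a + t • b‖⁻¹ := by positivity
  exact ⟨‖(1 - t) • a + t • b‖⁻¹ * (1 - t), ‖(1 - t) • a + t • b‖⁻¹ * t,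
    mul_pos hn (by linarith), mul_pos hn ht0', by rw [smul_add, smul_smul, smul_smul]⟩

lemma inv_norm_smul_mem_arc_sign_smul {p q : E3} (hpq : LinearIndependent ℝ ![p, q])
    {α β : ℝ} (hα : α ≠ 0) (hβ : β ≠ 0) :
    ‖α • p + β • q‖⁻¹ • (α • p + β • q) ∈ arc ((sign α : ℝ) • p) ((sign β : ℝ) • q) ∧
      ‖α • p + β • q‖⁻¹ • (α • p + β • q) ≠ (sign α : ℝ) • p ∧
      ‖α • p + β • q‖⁻¹ • (α • p + β • q) ≠ (sign β : ℝ) • q := by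
  set X := α • p + β • q
  have hX : X ≠ 0 := fun h => hα (LinearIndependent.pair_iff.1 hpq α β h).1
  have hc : 0 < ‖X‖⁻¹ := by positivity
  have hx : ‖X‖⁻¹ • X =
      (‖X‖⁻¹ * |α|) • ((sign α : ℝ) • p) + (‖X‖⁻¹ * |β|) • ((sign β : ℝ) • q) := by
    simp only [smul_smul, mul_assoc, abs_mul_sign]
    rw [smul_add, smul_smul, smul_smul]
  refine ⟨hx ▸ smul_add_mem_arc (by positivity) (by positivity) (by
    rw [← hx, norm_smul, norm_inv, norm_norm, inv_mul_cancel₀ (norm_ne_zero_iff.2 hX)]), ?_, ?_⟩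
  · intro h
    have := LinearIndependent.pair_iff.1 hpq (‖X‖⁻¹ * α - sign α) (‖X‖⁻¹ * β) (by
      rw [sub_smul, ← h]; simp only [X]; module)
    exact mul_ne_zero hc.ne' hβ this.2
  · intro h
    have := LinearIndependent.pair_iff.1 hpq (‖X‖⁻¹ * α) (‖X‖⁻¹ * β - sign β) (by
      rw [sub_smul, ← h]; simp only [X]; module)
    exact mul_ne_zero hc.ne' hα this.1

lemma sign_smul_mem_phat {P : Set E3} {p : E3} (hp : p ∈ P) {α : ℝ} (hα : α ≠ 0) :
    (sign α : ℝ) • p ∈ phat P := by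
  rcases hα.lt_or_gt with h | h
  · exact Or.inr ⟨p, hp, by simp [sign_neg h]⟩
  · exact Or.inl (by simpa [sign_pos h] using hp)

lemma exists_sign_smul_of_mem_phat {P : Set E3} {a : E3} (ha : a ∈ phat P) {u : ℝ}
    (hu : 0 < u) : ∃ p ∈ P, ∃ α : ℝ, α ≠ 0 ∧ a = (sign α : ℝ) • p ∧ u • a = α • p := by
  rcases ha with ha | ⟨p, hp, rfl⟩
  · exact ⟨a, ha, u, hu.ne', by simp [sign_pos hu], rfl⟩
  · exact ⟨p, hp, -u, by simpa using hu.ne', by simp [sign_neg (neg_neg_of_pos hu)], by simp⟩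

lemma exists_sign_smul_of_mem_arc {P : Set E3} (hPS : P ⊆ unitSphere) {a b x : E3}
    (ha : a ∈ phat P) (hb : b ∈ phat P) (hab : b ≠ -a) (hx : x ∈ arc a b) (hxa : x ≠ a)
    (hxb : x ≠ b) : ∃ p ∈ P, ∃ q ∈ P, ∃ α β : ℝ, α ≠ 0 ∧ β ≠ 0 ∧
      a = (sign α : ℝ) • p ∧ b = (sign β : ℝ) • q ∧ x = α • p + β • q := by
  have hunit : ∀ y ∈ phat P, ‖y‖ = 1 := by
    rintro y (hy | ⟨y, hy, rfl⟩)
    · exact hPS hy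
    · rw [norm_neg]; exact hPS hy
  obtain ⟨u, v, hu, hv, rfl⟩ :=
    exists_pos_smul_add_of_mem_arc (hunit a ha) (hunit b hb) hab hx hxa hxb
  obtain ⟨p, hp, α, hα, rfl, hpα⟩ := exists_sign_smul_of_mem_phat ha hu
  obtain ⟨q, hq, β, hβ, rfl, hqβ⟩ := exists_sign_smul_of_mem_phat hb hv
  exact ⟨p, hp, q, hq, α, β, hα, hβ, rfl, rfl, by rw [hpα, hqβ]⟩

lemma mk_mem_edges_iff {V : Set E3} {a b : E3} :
    s(a, b) ∈ edges V ↔ a ∈ V ∧ b ∈ V ∧ b ≠ a ∧ b ≠ -a := by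
  refine ⟨fun ⟨a', b', ha', hb', h1, h2, he⟩ => ?_,
    fun ⟨ha, hb, h1, h2⟩ => ⟨a, b, ha, hb, h1, h2, rfl⟩⟩
  rcases Sym2.eq_iff.1 he with ⟨rfl, rfl⟩ | ⟨rfl, rfl⟩
  · exact ⟨ha', hb', h1, h2⟩
  · exact ⟨hb', ha', h1.symm, fun h => h2 (by rw [h, neg_neg])⟩

lemma ne_of_sign_smul_mem_edges {V : Set E3} {p q : E3} {α β : ℝ} (hα : α ≠ 0) (hβ : β ≠ 0)
    (he : s((sign α : ℝ) • p, (sign β : ℝ) • q) ∈ edges V) : p ≠ q := by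
  rintro rfl
  obtain ⟨-, -, h1, h2⟩ := mk_mem_edges_iff.1 he
  rcases hα.lt_or_gt with hα | hα <;> rcases hβ.lt_or_gt with hβ | hβ <;>
    simp_all [sign_neg, sign_pos]

def crossingEdgePairs (V : Set E3) : Set (Sym2 (Sym2 E3)) :=
  {pr | ∃ e ∈ edges V, ∃ f ∈ edges V, e ≠ f ∧
    (∃ a b c d, e = s(a, b) ∧ f = s(c, d) ∧
      ∃ x, x ∈ arc a b ∩ arc c d ∧ x ∉ ({a, b, c, d} : Set E3)) ∧
    pr = s(e, f)}

/-- The crossing pair of edges of `P̂` over the lines through `p, q` and through `r, s`: the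
signs of the endpoints are those of the coefficients in `det3_smul_add_eq`. -/
def crossPair (p q r s : E3) : Sym2 (Sym2 E3) :=
  s(s((sign (-det3 q r s) : ℝ) • p, (sign (det3 p r s) : ℝ) • q),
    s((sign (det3 p q s) : ℝ) • r, (sign (-det3 p q r) : ℝ) • s))

lemma crossPair_rotate (p q r s : E3) : crossPair r s q p = crossPair p q r s := by
  have e1 : det3 s q p = -det3 p q s := by rw [det3_rotate, det3_swap₂₃]
  have e2 : det3 r q p = -det3 p q r := by rw [det3_rotate, det3_swap₂₃]
  rw [crossPair, crossPair, e1, e2, det3_rotate p r s, det3_rotate q r s, neg_neg]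
  exact Sym2.eq_iff.2 (Or.inr ⟨rfl, Sym2.eq_swap⟩)

lemma sign_smul_edges_eq_crossPair {p q r s : E3} (h : LinearIndependent ℝ ![q, r, s])
    {α β γ η : ℝ} (hα : α ≠ 0) (he : α • p + β • q = γ • r + η • s) :
    s(s((sign α : ℝ) • p, (sign β : ℝ) • q), s((sign γ : ℝ) • r, (sign η : ℝ) • s)) =
        crossPair p q r s ∨
      s(s((sign α : ℝ) • p, (sign β : ℝ) • q), s((sign γ : ℝ) • r, (sign η : ℝ) • s)) =
        crossPair q p r s := by
  obtain ⟨c, rfl, rfl, rfl, rfl⟩ := exists_eq_mul_det3_of_smul_add_eq h he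
  rcases (left_ne_zero_of_mul hα).lt_or_gt with hc | hc
  · right
    simp only [crossPair, sign_mul, sign_neg hc, det3_swap q p, Left.sign_neg, neg_one_mul,
      neg_neg]
    exact Sym2.eq_iff.2 (.inl ⟨Sym2.eq_swap, rfl⟩)
  · left
    simp only [crossPair, sign_mul, sign_pos hc, one_mul]

/-- The crossing pair of the diagonals `f 0 f 2` and `f 1 f 3` of the quadrilateral `f`. -/
def diagonalCrossPair {P : Set E3} (f : Fin 4 ↪ P) : Sym2 (Sym2 E3) :=
  crossPair (f 0) (f 2) (f 1) (f 3)

lemma diagonalCrossPair_addRight {P : Set E3} (f : Fin 4 ↪ P) (i : Fin 4) :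
    diagonalCrossPair ((Equiv.addRight i).toEmbedding.trans f) = diagonalCrossPair f := by
  have h1 := crossPair_rotate (f 0) (f 2) (f 1) (f 3)
  have h2 := crossPair_rotate (f 1) (f 3) (f 2) (f 0)
  have h3 := crossPair_rotate (f 2) (f 0) (f 3) (f 1)
  fin_cases i <;> simp [diagonalCrossPair, h1, h2, h3]

open Classical in
def lineRep (P : Set E3) (x : E3) : E3 := if x ∈ P then x else -x

namespace GenPos

variable {P : Set E3} {p q r s : E3}

lemma linearIndependent_pair (hgen : GenPos P) (hP : 3 ≤ P.ncard) (hp : p ∈ P) (hq : q ∈ P)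
    (hpq : p ≠ q) : LinearIndependent ℝ ![p, q] := by
  obtain ⟨r, hr, hrp, hrq⟩ := exists_mem_ne_ne_of_three_le_ncard hP p q
  refine LinearIndependent.pair_iff.2 fun s t hst => ?_
  obtain ⟨hs, ht, -⟩ := (hgen p hp q hq r hr hpq hrp.symm hrq.symm
    ).eq_zero_of_smul_add_smul_add_smul_eq_zero (C := 0) (by simpa using hst)
  exact ⟨hs, ht⟩

lemma ne_zero (hgen : GenPos P) (hP : 3 ≤ P.ncard) (hp : p ∈ P) : p ≠ 0 := by
  obtain ⟨q, hq, hqp, -⟩ := exists_mem_ne_ne_of_three_le_ncard hP p p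
  simpa using (hgen.linearIndependent_pair hP hp hq hqp.symm).ne_zero 0

lemma smul_eq_smul_iff (hgen : GenPos P) (hP : 3 ≤ P.ncard) (hp : p ∈ P) (hq : q ∈ P)
    {ε δ : ℝ} (hε : ε ≠ 0) : ε • p = δ • q ↔ p = q ∧ ε = δ := by
  refine ⟨fun h => ?_, fun ⟨hpq, hεδ⟩ => by rw [hpq, hεδ]⟩
  by_cases hpq : p = q
  · subst hpq
    exact ⟨rfl, smul_left_injective ℝ (hgen.ne_zero hP hp) h⟩
  · have := LinearIndependent.pair_iff.1 (hgen.linearIndependent_pair hP hp hq hpq) ε (-δ)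
      (by rw [h, neg_smul, add_neg_cancel])
    exact absurd this.1 hε

lemma neg_notMem (hgen : GenPos P) (hP : 3 ≤ P.ncard) (hp : p ∈ P) : -p ∉ P := fun hnp => by
  have := (hgen.smul_eq_smul_iff hP hp hnp (ε := -1) (δ := 1) (by norm_num)).1 (by simp)
  norm_num at this

lemma lineRep_sign_smul (hgen : GenPos P) (hP : 3 ≤ P.ncard) (hp : p ∈ P) {α : ℝ}
    (hα : α ≠ 0) : lineRep P ((sign α : ℝ) • p) = p := by
  rcases hα.lt_or_gt with h | h
  · simp [lineRep, sign_neg h, hgen.neg_notMem hP hp]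
  · simp [lineRep, sign_pos h, hp]

lemma sign_smul_mem_edges (hgen : GenPos P) (hP : 3 ≤ P.ncard) (hp : p ∈ P) (hq : q ∈ P)
    (hpq : p ≠ q) {α β : ℝ} (hα : α ≠ 0) (hβ : β ≠ 0) :
    s((sign α : ℝ) • p, (sign β : ℝ) • q) ∈ edges (phat P) := by
  refine mk_mem_edges_iff.2 ⟨sign_smul_mem_phat hp hα, sign_smul_mem_phat hq hβ, ?_, ?_⟩ <;>
    simp [-neg_smul, ← neg_smul, hgen.smul_eq_smul_iff hP hq hp, sign_cast_ne_zero hβ, hpq.symm]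

lemma crossPair_swap_ne (hgen : GenPos P) (hP : 3 ≤ P.ncard)
    (hp : p ∈ P) (hq : q ∈ P) (hr : r ∈ P) (hs : s ∈ P)
    (hpq : p ≠ q) (hpr : p ≠ r) (hps : p ≠ s) (hqr : q ≠ r) (hqs : q ≠ s) (hrs : r ≠ s) :
    crossPair p q s r ≠ crossPair p q r s := by
  have h1 := det3_ne_zero (hgen q hq r hr s hs hqr hqs hrs)
  have h2 := det3_ne_zero (hgen p hp r hr s hs hpr hps hrs)
  rw [crossPair, crossPair, det3_swap₂₃ q r s, det3_swap₂₃ p r s]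
  simp [Left.sign_neg, -neg_smul, self_eq_neg, neg_eq_self, hgen.smul_eq_smul_iff hP, hp, hq,
    hr, hs, hpq, hpr, hps, sign_cast_ne_zero h1, sign_cast_ne_zero h2]

lemma map_lineRep_crossPair (hgen : GenPos P) (hP : 3 ≤ P.ncard)
    (hp : p ∈ P) (hq : q ∈ P) (hr : r ∈ P) (hs : s ∈ P)
    (hpq : p ≠ q) (hpr : p ≠ r) (hps : p ≠ s) (hqr : q ≠ r) (hqs : q ≠ s) (hrs : r ≠ s) :
    Sym2.map (Sym2.map (lineRep P)) (crossPair p q r s) = s(s(p, q), s(r, s)) := by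
  have h1 := neg_ne_zero.2 (det3_ne_zero (hgen q hq r hr s hs hqr hqs hrs))
  have h2 := det3_ne_zero (hgen p hp r hr s hs hpr hps hrs)
  have h3 := det3_ne_zero (hgen p hp q hq s hs hpq hps hqs)
  have h4 := neg_ne_zero.2 (det3_ne_zero (hgen p hp q hq r hr hpq hpr hqr))
  simp only [crossPair, Sym2.map_mk, hgen.lineRep_sign_smul hP hp h1,
    hgen.lineRep_sign_smul hP hq h2, hgen.lineRep_sign_smul hP hr h3,
    hgen.lineRep_sign_smul hP hs h4]

lemma crossPair_mem_crossingEdgePairs (hgen : GenPos P) (hP : 3 ≤ P.ncard)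
    (hp : p ∈ P) (hq : q ∈ P) (hr : r ∈ P) (hs : s ∈ P)
    (hpq : p ≠ q) (hpr : p ≠ r) (hps : p ≠ s) (hqr : q ≠ r) (hqs : q ≠ s) (hrs : r ≠ s) :
    crossPair p q r s ∈ crossingEdgePairs (phat P) := by
  have h1 := neg_ne_zero.2 (det3_ne_zero (hgen q hq r hr s hs hqr hqs hrs))
  have h2 := det3_ne_zero (hgen p hp r hr s hs hpr hps hrs)
  have h3 := det3_ne_zero (hgen p hp q hq s hs hpq hps hqs)
  have h4 := neg_ne_zero.2 (det3_ne_zero (hgen p hp q hq r hr hpq hpr hqr))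
  obtain ⟨hab, hxa, hxb⟩ :=
    inv_norm_smul_mem_arc_sign_smul (hgen.linearIndependent_pair hP hp hq hpq) h1 h2
  obtain ⟨hcd, hxc, hxd⟩ :=
    inv_norm_smul_mem_arc_sign_smul (hgen.linearIndependent_pair hP hr hs hrs) h3 h4
  rw [det3_smul_add_eq] at hab hxa hxb
  refine ⟨_, hgen.sign_smul_mem_edges hP hp hq hpq h1 h2, _,
    hgen.sign_smul_mem_edges hP hr hs hrs h3 h4, ?_, ⟨_, _, _, _, rfl, rfl, _, ⟨hab, hcd⟩, ?_⟩, rfl⟩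
  · simp [hgen.smul_eq_smul_iff hP hp, hr, hs, sign_cast_ne_zero h1, hpr, hps]
  · simp only [mem_insert_iff, mem_singleton_iff, not_or]
    exact ⟨hxa, hxb, hxc, hxd⟩

lemma sign_smul_edge_eq_of_smul_add_eq (hgen : GenPos P) (hP : 3 ≤ P.ncard) (hp : p ∈ P)
    (hq : q ∈ P) (hs : s ∈ P) (hpq : p ≠ q) (hps : p ≠ s) {α β γ η : ℝ} (hβ : β ≠ 0)
    (h : α • p + β • q = γ • p + η • s) :
    s((sign α : ℝ) • p, (sign β : ℝ) • q) = s((sign γ : ℝ) • p, (sign η : ℝ) • s) := by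
  by_cases hqs : q = s
  · subst hqs
    obtain ⟨h1, h2⟩ := LinearIndependent.pair_iff.1 (hgen.linearIndependent_pair hP hp hq hpq)
      (α - γ) (β - η) (by rw [sub_smul, sub_smul]; linear_combination (norm := module) h)
    rw [sub_eq_zero.1 h1, sub_eq_zero.1 h2]
  · obtain ⟨-, h2, -⟩ := (hgen p hp q hq s hs hpq hps hqs).eq_zero_of_smul_add_smul_add_smul_eq_zero
      (A := α - γ) (B := β) (C := -η) (by linear_combination (norm := module) h)
    exact absurd h2 hβ

lemma exists_eq_crossPair_of_mem_crossingEdgePairs (hgen : GenPos P) (hP : 3 ≤ P.ncard)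
    (hPS : P ⊆ unitSphere) {w : Sym2 (Sym2 E3)} (hw : w ∈ crossingEdgePairs (phat P)) :
    ∃ p ∈ P, ∃ q ∈ P, ∃ r ∈ P, ∃ s ∈ P, p ≠ q ∧ p ≠ r ∧ p ≠ s ∧ q ≠ r ∧ q ≠ s ∧ r ≠ s ∧
      w = crossPair p q r s := by
  obtain ⟨_, he, _, hf, hef, ⟨a, b, c, d, rfl, rfl, x, ⟨hxab, hxcd⟩, hx⟩, rfl⟩ := hw
  simp only [mem_insert_iff, mem_singleton_iff, not_or] at hx
  obtain ⟨ha, hb, -, hab⟩ := mk_mem_edges_iff.1 he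
  obtain ⟨hc, hd, -, hcd⟩ := mk_mem_edges_iff.1 hf
  obtain ⟨p, hp, q, hq, α, β, hα, hβ, rfl, rfl, rfl⟩ :=
    exists_sign_smul_of_mem_arc hPS ha hb hab hxab hx.1 hx.2.1
  obtain ⟨r, hr, s, hs, γ, η, hγ, hη, rfl, rfl, hx'⟩ :=
    exists_sign_smul_of_mem_arc hPS hc hd hcd hxcd hx.2.2.1 hx.2.2.2
  have hpq := ne_of_sign_smul_mem_edges hα hβ he
  have hrs := ne_of_sign_smul_mem_edges hγ hη hf
  by_cases hdeg : r = p ∨ r = q ∨ s = p ∨ s = q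
  · refine absurd ?_ hef
    rcases hdeg with rfl | rfl | rfl | rfl
    · exact hgen.sign_smul_edge_eq_of_smul_add_eq hP hr hq hs hpq hrs hβ hx'
    · exact Sym2.eq_swap.trans (hgen.sign_smul_edge_eq_of_smul_add_eq hP hr hp hs hpq.symm hrs
        hα ((add_comm _ _).trans hx'))
    · exact (hgen.sign_smul_edge_eq_of_smul_add_eq hP hs hq hr hpq hrs.symm hβ
        (hx'.trans (add_comm _ _))).trans Sym2.eq_swap
    · exact Sym2.eq_swap.trans ((hgen.sign_smul_edge_eq_of_smul_add_eq hP hs hp hr hpq.symm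
        hrs.symm hα ((add_comm _ _).trans (hx'.trans (add_comm _ _)))).trans Sym2.eq_swap)
  obtain ⟨hrp, hrq, hsp, hsq⟩ : r ≠ p ∧ r ≠ q ∧ s ≠ p ∧ s ≠ q := by
    simpa only [not_or] using hdeg
  rcases sign_smul_edges_eq_crossPair (hgen q hq r hr s hs hrq.symm hsq.symm hrs) hα hx' with h | h
  · exact ⟨p, hp, q, hq, r, hr, s, hs, hpq, hrp.symm, hsp.symm, hrq.symm, hsq.symm, hrs, h⟩
  · exact ⟨q, hq, p, hp, r, hr, s, hs, hpq.symm, hrq.symm, hsq.symm, hrp.symm, hsp.symm, hrs, h⟩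

lemma crossingEdgePairs_phat_eq_range (hgen : GenPos P) (hP : 3 ≤ P.ncard)
    (hPS : P ⊆ unitSphere) : crossingEdgePairs (phat P) = range (diagonalCrossPair (P := P)) := by
  ext w
  refine ⟨fun hw => ?_, ?_⟩
  · obtain ⟨p, hp, q, hq, r, hr, s, hs, hpq, hpr, hps, hqr, hqs, hrs, rfl⟩ :=
      hgen.exists_eq_crossPair_of_mem_crossingEdgePairs hP hPS hw
    refine ⟨⟨![⟨p, hp⟩, ⟨r, hr⟩, ⟨q, hq⟩, ⟨s, hs⟩], fun i j hij => ?_⟩, rfl⟩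
    fin_cases i <;> fin_cases j <;> simp_all [eq_comm]
  · rintro ⟨f, rfl⟩
    have hne {i j : Fin 4} (hij : i ≠ j) : (f i : E3) ≠ f j :=
      fun e => hij (f.injective (Subtype.ext e))
    exact hgen.crossPair_mem_crossingEdgePairs hP (f 0).2 (f 2).2 (f 1).2 (f 3).2
      (hne (by decide)) (hne (by decide)) (hne (by decide)) (hne (by decide))
      (hne (by decide)) (hne (by decide))

lemma diagonalCrossPair_eq_iff (hgen : GenPos P) (hP : 3 ≤ P.ncard) {f g : Fin 4 ↪ P} :
    diagonalCrossPair g = diagonalCrossPair f ↔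
      ∃ i, g = (Equiv.addRight i).toEmbedding.trans f := by
  have hne (h : Fin 4 ↪ P) {i j : Fin 4} (hij : i ≠ j) : (h i : E3) ≠ h j :=
    fun e => hij (h.injective (Subtype.ext e))
  have hsplit (h : Fin 4 ↪ P) : Sym2.map (Sym2.map (lineRep P)) (diagonalCrossPair h) =
      s(s((h 0 : E3), h 2), s((h 1 : E3), h 3)) :=
    hgen.map_lineRep_crossPair hP (h 0).2 (h 2).2 (h 1).2 (h 3).2 (hne h (by decide))
      (hne h (by decide)) (hne h (by decide)) (hne h (by decide)) (hne h (by decide))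
      (hne h (by decide))
  refine ⟨fun hgf => ?_, fun ⟨i, hi⟩ => hi ▸ diagonalCrossPair_addRight f i⟩
  obtain ⟨i, hi | hi⟩ := exists_eq_add_or_eq_neg_add_of_diagonals_eq (f := fun j => (f j : E3))
    (g := fun j => (g j : E3))
    (by simpa only [hsplit] using congrArg (Sym2.map (Sym2.map (lineRep P))) hgf)
  · exact ⟨i, Function.Embedding.ext fun j => Subtype.ext (hi j)⟩
  · set f' := (Equiv.addRight i).toEmbedding.trans f
    have hg (j : Fin 4) : (g j : E3) = f' (-j) := by simp [f', hi]
    refine absurd ?_ (hgen.crossPair_swap_ne hP (f' 0).2 (f' 2).2 (f' 1).2 (f' 3).2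
      (hne f' (by decide)) (hne f' (by decide)) (hne f' (by decide)) (hne f' (by decide))
      (hne f' (by decide)) (hne f' (by decide)))
    calc crossPair (f' 0) (f' 2) (f' 3) (f' 1) = diagonalCrossPair g := by
          simp only [diagonalCrossPair, hg]; rfl
      _ = diagonalCrossPair f' := by rw [hgf, diagonalCrossPair_addRight]

lemma ncard_diagonalCrossPair_fiber (hgen : GenPos P) (hP : 3 ≤ P.ncard) (f : Fin 4 ↪ P) :
    {g : Fin 4 ↪ P | diagonalCrossPair g = diagonalCrossPair f}.ncard = 4 := by
  have hfib : {g : Fin 4 ↪ P | diagonalCrossPair g = diagonalCrossPair f} =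
      range fun i : Fin 4 => (Equiv.addRight i).toEmbedding.trans f := by
    ext g
    simp [hgen.diagonalCrossPair_eq_iff hP, eq_comm]
  rw [hfib, ncard_range_of_injective, Nat.card_eq_fintype_card, Fintype.card_fin]
  intro i j hij
  simpa using congrArg (fun h : Fin 4 ↪ P => h 0) hij

end GenPos

theorem count_crossing_pairs_of_arcs
    (k : ℕ) (hk : 3 ≤ k) (P : Set E3) (hPS : P ⊆ unitSphere)
    (hPfin : P.Finite) (hcard : P.ncard = k) (hgen : GenPos P) :
    (Set.ncard {pr : Sym2 (Sym2 E3) |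
        ∃ e ∈ edges (phat P), ∃ f ∈ edges (phat P), e ≠ f ∧
          (∃ a b c d, e = s(a, b) ∧ f = s(c, d) ∧
            ∃ x, x ∈ arc a b ∩ arc c d ∧ x ∉ ({a, b, c, d} : Set E3)) ∧
          pr = s(e, f)} : ℚ) =
      (k : ℚ) * ((k : ℚ) - 1) * ((k : ℚ) - 2) * ((k : ℚ) - 3) / 4 := by
  have hP : 3 ≤ P.ncard := hcard ▸ hk
  have := hPfin.fintype
  have hcount := card_eq_ncard_range_mul diagonalCrossPair (hgen.ncard_diagonalCrossPair_fiber hP)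
  rw [← hgen.crossingEdgePairs_phat_eq_range hP hPS, Nat.card_eq_fintype_card,
    Fintype.card_embedding_eq, Fintype.card_fin, ← Nat.card_eq_fintype_card, Nat.card_coe_set_eq,
    hcard] at hcount
  change ((crossingEdgePairs (phat P)).ncard : ℚ) = _
  rw [eq_div_iff (by norm_num), ← Nat.cast_ofNat, ← Nat.cast_mul, ← hcount]
  simp [Nat.descFactorial_succ, Nat.cast_sub (by omega : 3 ≤ k), Nat.cast_sub (by omega : 2 ≤ k),
    Nat.cast_sub (by omega : 1 ≤ k)]
  ring

end
end

section
/- Let k ≥ 3, let P ⊆ S² be a set of k points in general position, P̂ = P ∪ (−P), and let p ∈ P. Let W be a 2-dimensional linear subspace with p ∈ W such that W ∩ P̂ = {p, −p}. Then the number of edges {a,b} of P̂ with a, b ∉ {p, −p} whose arc arc(a,b) meets the great circle W ∩ S² equals (k−1)(k−2). -/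
open Set
open scoped RealInnerProductSpace

noncomputable section

/-!
Write `W = ker f` for a linear functional `f`. In general position no two points of `P` are
antipodal, so on `P̂` the functional `f` vanishes only at `±p`, and for each `q ∈ P \ {p}`
exactly one of `±q` lies on the positive side of `W`: the positive side `A` of `P̂` has
`k - 1` points and the negative side is `-A`. Since the arc from `a` to `b` is the radial
projection of the segment `[a, b]`, it meets `W` exactly when `f` changes sign between `a`
and `b`. The edges in question are thus the pairs `{a, b}` with `a ∈ A`, `b ∈ -A`, `b ≠ -a`,
and there are `(k - 1) * (k - 1) - (k - 1)` of them.
-/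

open Pointwise

theorem Submodule.exists_ker_eq_of_finrank_add_one {K V : Type*} [DivisionRing K]
    [AddCommGroup V] [Module K V] [FiniteDimensional K V] (W : Submodule K V)
    (hW : Module.finrank K W + 1 = Module.finrank K V) :
    ∃ f : Module.Dual K V, LinearMap.ker f = W := by
  have hlt : W < ⊤ := lt_top_iff_ne_top.mpr fun h => by
    rw [h, finrank_top] at hW
    omega
  obtain ⟨f, hf0, hWf⟩ := W.exists_le_ker_of_lt_top hlt
  refine ⟨f, (Submodule.eq_of_le_of_finrank_eq hWf ?_).symm⟩
  have := Module.Dual.finrank_ker_add_one_of_ne_zero hf0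
  omega

theorem exists_mem_Icc_convex_comb_eq_zero_iff {u v : ℝ} (hu : u ≠ 0) (hv : v ≠ 0) :
    (∃ t ∈ Icc (0 : ℝ) 1, (1 - t) * u + t * v = 0) ↔ u * v < 0 := by
  constructor
  · rintro ⟨t, ⟨ht0, ht1⟩, ht⟩
    have ht0' : t ≠ 0 := by rintro rfl; simp [hu] at ht
    have htv : 0 < t * (v * v) :=
      mul_pos (lt_of_le_of_ne ht0 (Ne.symm ht0')) (mul_self_pos.mpr hv)
    have hsum : (1 - t) * (u * v) + t * (v * v) = 0 := by linear_combination v * ht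
    by_contra! huv
    linarith [mul_nonneg (sub_nonneg.mpr ht1) huv]
  · intro huv
    obtain ⟨hne, h0, h1⟩ : u - v ≠ 0 ∧ 0 ≤ u / (u - v) ∧ u / (u - v) ≤ 1 := by
      rcases mul_neg_iff.mp huv with ⟨hu', hv'⟩ | ⟨hu', hv'⟩
      · have hd : 0 < u - v := by linarith
        exact ⟨hd.ne', div_nonneg hu'.le hd.le, (div_le_one hd).mpr (by linarith)⟩
      · have hd : u - v < 0 := by linarith
        exact ⟨hd.ne, div_nonneg_of_nonpos hu'.le hd.le,
          (div_le_one_of_neg hd).mpr (by linarith)⟩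
    exact ⟨u / (u - v), ⟨h0, h1⟩, by field_simp; ring⟩

theorem add_smul_ne_zero_of_norm_eq_one {V : Type*} [NormedAddCommGroup V] [NormedSpace ℝ V]
    {a b : V} (ha : ‖a‖ = 1) (hb : ‖b‖ = 1) (hba : b ≠ -a) {t : ℝ}
    (ht : t ∈ Icc (0 : ℝ) 1) :
    (1 - t) • a + t • b ≠ 0 := by
  intro h
  have hnorm : ‖(1 - t) • a‖ = ‖t • b‖ := by
    rw [add_eq_zero_iff_eq_neg.mp h, norm_neg]
  rw [norm_smul, norm_smul, ha, hb, Real.norm_of_nonneg (sub_nonneg.mpr ht.2),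
    Real.norm_of_nonneg ht.1] at hnorm
  have ht2 : t = 1 / 2 := by linarith
  subst ht2
  apply hba
  have : (1 / 2 : ℝ) • (a + b) = 0 := by
    rw [smul_add]; convert h using 2; norm_num
  linear_combination (norm := module) (2 : ℝ) • this

theorem arc_inter_ker_inter_unitSphere_nonempty_iff {a b : E3} (ha : ‖a‖ = 1) (hb : ‖b‖ = 1)
    (hba : b ≠ -a) (f : Module.Dual ℝ E3) :
    (arc a b ∩ ((LinearMap.ker f : Set E3) ∩ unitSphere)).Nonempty ↔
      ∃ t ∈ Icc (0 : ℝ) 1, (1 - t) * f a + t * f b = 0 := by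
  have hf : ∀ t : ℝ, f ((1 - t) • a + t • b) = (1 - t) * f a + t * f b := fun t => by
    simp only [map_add, map_smul, smul_eq_mul]
  constructor
  · rintro ⟨x, ⟨t, ht, rfl⟩, hker, -⟩
    have hy := add_smul_ne_zero_of_norm_eq_one ha hb hba ht
    refine ⟨t, ht, ?_⟩
    rw [SetLike.mem_coe, LinearMap.mem_ker, map_smul, smul_eq_mul, hf] at hker
    exact (mul_eq_zero.mp hker).resolve_left (inv_ne_zero (norm_ne_zero_iff.mpr hy))
  · rintro ⟨t, ht, hzero⟩
    have hy := add_smul_ne_zero_of_norm_eq_one ha hb hba ht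
    refine ⟨_, ⟨t, ht, rfl⟩, ?_, ?_⟩
    · rw [SetLike.mem_coe, LinearMap.mem_ker, map_smul, smul_eq_mul, hf, hzero, mul_zero]
    · show ‖_‖ = 1
      rw [norm_smul, norm_inv, norm_norm, inv_mul_cancel₀ (norm_ne_zero_iff.mpr hy)]

theorem Sym2.injOn_mk_prod {α : Type*} {A B : Set α} (hAB : Disjoint A B) :
    InjOn (Sym2.mk (α := α)).uncurry (A ×ˢ B) := by
  rintro ⟨a, b⟩ ⟨ha, -⟩ ⟨c, d⟩ ⟨-, hd⟩ h
  rcases Sym2.eq_iff.mp h with ⟨rfl, rfl⟩ | ⟨rfl, -⟩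
  · rfl
  · exact absurd hd (disjoint_left.mp hAB ha)

theorem ncard_prod_neg_diff_antidiagonal {G : Type*} [InvolutiveNeg G] {A : Set G}
    (hA : A.Finite) :
    ((A ×ˢ (-A)) \ {x : G × G | x.2 = -x.1}).ncard = A.ncard * (A.ncard - 1) := by
  have hdiag : (A ×ˢ (-A)) \ {x : G × G | x.2 = -x.1} =
      (A ×ˢ (-A)) \ (fun a => (a, -a)) '' A := by
    ext ⟨a, b⟩
    simp only [mem_sdiff, mem_prod, mem_neg, mem_ofPred_eq, mem_image, Prod.mk.injEq]
    constructor
    · rintro ⟨hab, hne⟩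
      exact ⟨hab, fun ⟨c, _, hca, hcb⟩ => hne (by rw [← hcb, hca])⟩
    · rintro ⟨hab, hne⟩
      exact ⟨hab, fun h => hne ⟨a, hab.1, rfl, h.symm⟩⟩
  have hsub : (fun a => (a, -a)) '' A ⊆ A ×ˢ (-A) := by
    rintro _ ⟨a, ha, rfl⟩
    exact ⟨ha, by rwa [mem_neg, neg_neg]⟩
  rw [hdiag, ncard_sdiff hsub (hA.image _), ncard_prod, ncard_neg,
    ncard_image_of_injective _ fun a b h => (Prod.mk.inj h).1, Nat.mul_sub_one]

def positiveSide (f : Module.Dual ℝ E3) (V : Set E3) : Set E3 :=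
  {a ∈ V | 0 < f a}

theorem disjoint_positiveSide_neg (f : Module.Dual ℝ E3) (V : Set E3) :
    Disjoint (positiveSide f V) (-positiveSide f V) := by
  refine disjoint_left.mpr fun a ha hna => ?_
  have := hna.2
  rw [map_neg] at this
  linarith [ha.2]

theorem ncard_positiveSide_phat {P : Set E3} (hP : ∀ q ∈ P, ∀ r ∈ P, r ≠ -q)
    (f : Module.Dual ℝ E3) :
    (positiveSide f (phat P)).ncard = {q ∈ P | f q ≠ 0}.ncard := by
  classical
  set g : E3 → E3 := fun q => if 0 < f q then q else -q
  have hg : InjOn g {q ∈ P | f q ≠ 0} := by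
    rintro x ⟨hx, -⟩ y ⟨hy, -⟩ hxy
    simp only [g] at hxy
    split_ifs at hxy
    · exact hxy
    · exact absurd hxy (hP y hy x hx)
    · exact absurd hxy.symm (hP x hx y hy)
    · exact neg_inj.mp hxy
  rw [← hg.ncard_image]
  congr 1
  ext a
  constructor
  · rintro ⟨ha | ⟨q, hq, rfl⟩, hpos⟩
    · exact ⟨a, ⟨ha, hpos.ne'⟩, if_pos hpos⟩
    · rw [map_neg, neg_pos] at hpos
      exact ⟨q, ⟨hq, hpos.ne⟩, if_neg hpos.not_gt⟩
  · rintro ⟨q, ⟨hq, hfq⟩, rfl⟩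
    by_cases h : 0 < f q
    · simp only [g, if_pos h]
      exact ⟨Or.inl hq, h⟩
    · simp only [g, if_neg h]
      refine ⟨Or.inr ⟨q, hq, rfl⟩, ?_⟩
      rw [map_neg, neg_pos]
      exact lt_of_le_of_ne (not_lt.mp h) hfq

theorem GenPos.ne_neg {P : Set E3} (hgen : GenPos P) (h3 : 3 ≤ P.ncard) (h0 : (0 : E3) ∉ P)
    {q r : E3} (hq : q ∈ P) (hr : r ∈ P) : r ≠ -q := by
  rintro rfl
  have hq0 : q ≠ 0 := fun h => h0 (h ▸ hq)
  obtain ⟨c, hc, hcq⟩ : ∃ c ∈ P, c ∉ ({q, -q} : Set E3) :=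
    exists_mem_notMem_of_ncard_lt_ncard
      ((ncard_insert_le q {-q}).trans_lt (by rw [ncard_singleton]; omega))
  simp only [mem_insert_iff, mem_singleton_iff, not_or] at hcq
  have hq_ne : q ≠ -q := fun h => hq0 (by linear_combination (norm := module) (1 / 2 : ℝ) • h)
  have hli := hgen q hq (-q) hr c hc hq_ne (Ne.symm hcq.1) (Ne.symm hcq.2)
  have := Fintype.linearIndependent_iff.mp hli ![1, 1, 0] (by simp [Fin.sum_univ_three]) 0
  simp at this

theorem phat_subset_unitSphere {P : Set E3} (hP : P ⊆ unitSphere) : phat P ⊆ unitSphere :=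
  union_subset hP <| by
    rintro _ ⟨q, hq, rfl⟩
    simpa [unitSphere] using hP hq

theorem neg_mem_phat {P : Set E3} {a : E3} (ha : a ∈ phat P) : -a ∈ phat P := by
  rcases ha with ha | ⟨q, hq, rfl⟩
  · exact Or.inr ⟨a, ha, rfl⟩
  · exact Or.inl (by rwa [neg_neg])

theorem setOf_edges_meeting_ker_eq_image {V Z : Set E3} (f : Module.Dual ℝ E3)
    (hVS : V ⊆ unitSphere) (hVneg : ∀ a ∈ V, -a ∈ V) (hZ : ∀ a ∈ V, a ∈ Z ↔ f a = 0) :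
    {e : Sym2 E3 | ∃ a b, a ∈ V ∧ b ∈ V ∧ b ≠ a ∧ b ≠ -a ∧ a ∉ Z ∧ b ∉ Z ∧
        (arc a b ∩ ((LinearMap.ker f : Set E3) ∩ unitSphere)).Nonempty ∧ e = s(a, b)} =
      Sym2.mk.uncurry ''
        ((positiveSide f V ×ˢ (-positiveSide f V)) \ {x : E3 × E3 | x.2 = -x.1}) := by
  have hcross : ∀ a ∈ V, ∀ b ∈ V, b ≠ -a → a ∉ Z → b ∉ Z →
      ((arc a b ∩ ((LinearMap.ker f : Set E3) ∩ unitSphere)).Nonempty ↔ f a * f b < 0) :=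
    fun a ha b hb hba haZ hbZ => by
      rw [arc_inter_ker_inter_unitSphere_nonempty_iff (hVS ha) (hVS hb) hba,
        exists_mem_Icc_convex_comb_eq_zero_iff ((hZ a ha).not.mp haZ) ((hZ b hb).not.mp hbZ)]
  ext e
  constructor
  · rintro ⟨a, b, ha, hb, -, hba, haZ, hbZ, hmeet, rfl⟩
    rcases mul_neg_iff.mp ((hcross a ha b hb hba haZ hbZ).mp hmeet) with
      ⟨hfa, hfb⟩ | ⟨hfa, hfb⟩
    · refine ⟨(a, b), ⟨⟨⟨ha, hfa⟩, hVneg b hb, ?_⟩, hba⟩, rfl⟩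
      rwa [map_neg, neg_pos]
    · refine ⟨(b, a), ⟨⟨⟨hb, hfb⟩, hVneg a ha, ?_⟩,
        fun h => hba (neg_eq_iff_eq_neg.mp h.symm)⟩, Sym2.eq_swap⟩
      rwa [map_neg, neg_pos]
  · rintro ⟨⟨a, b⟩, ⟨⟨⟨ha, hfa⟩, hb, hfb⟩, hba⟩, rfl⟩
    simp only [map_neg, neg_pos] at hfa hfb ha hb
    replace hb : b ∈ V := by simpa using hVneg _ hb
    have hba : b ≠ -a := hba
    have haZ : a ∉ Z := (hZ a ha).not.mpr hfa.ne'
    have hbZ : b ∉ Z := (hZ b hb).not.mpr hfb.ne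
    exact ⟨a, b, ha, hb, fun h => (hfb.trans hfa).ne (congrArg f h), hba, haZ, hbZ,
      (hcross a ha b hb hba haZ hbZ).mpr (mul_neg_of_pos_of_neg hfa hfb), rfl⟩

theorem count_edges_meeting_great_circle_general
    (k : ℕ) (hk : 3 ≤ k) (P : Set E3) (hPS : P ⊆ unitSphere)
    (hcard : P.ncard = k) (hgen : GenPos P)
    (p : E3) (hp : p ∈ P)
    (W : Submodule ℝ E3) (hW : Module.finrank ℝ W = 2)
    (hWP : (W : Set E3) ∩ phat P = ({p, -p} : Set E3)) :
    Set.ncard {e : Sym2 E3 | ∃ a b, a ∈ phat P ∧ b ∈ phat P ∧ b ≠ a ∧ b ≠ -a ∧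
        a ∉ ({p, -p} : Set E3) ∧ b ∉ ({p, -p} : Set E3) ∧
        (arc a b ∩ ((W : Set E3) ∩ unitSphere)).Nonempty ∧ e = s(a, b)} =
      (k - 1) * (k - 2) := by
  obtain ⟨f, rfl⟩ := W.exists_ker_eq_of_finrank_add_one (by rw [hW, finrank_euclideanSpace_fin])
  have hPfin : P.Finite := finite_of_ncard_ne_zero (by omega)
  have h0 : (0 : E3) ∉ P := fun h => by simpa [unitSphere] using hPS h
  have hanti : ∀ q ∈ P, ∀ r ∈ P, r ≠ -q := fun q hq r hr =>
    hgen.ne_neg (hcard ▸ hk) h0 hq hr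
  have hZ : ∀ a ∈ phat P, a ∈ ({p, -p} : Set E3) ↔ f a = 0 := fun a ha => by
    rw [← hWP]
    simp [ha]
  have hside : (positiveSide f (phat P)).ncard = k - 1 := by
    rw [ncard_positiveSide_phat hanti, ← hcard, ← ncard_sdiff_singleton_of_mem hp]
    congr 1
    ext q
    simp only [mem_ofPred_eq, mem_sdiff, mem_singleton_iff, and_congr_right_iff]
    intro hq
    rw [Ne, ← hZ q (Or.inl hq)]
    simp [hanti p hp q hq]
  have hAfin : (positiveSide f (phat P)).Finite :=
    (hPfin.union (hPfin.image _)).subset (sep_subset _ _)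
  rw [setOf_edges_meeting_ker_eq_image f (phat_subset_unitSphere hPS) (fun a => neg_mem_phat) hZ,
    ((Sym2.injOn_mk_prod (disjoint_positiveSide_neg f _)).mono sdiff_subset).ncard_image,
    ncard_prod_neg_diff_antidiagonal hAfin, hside, Nat.sub_sub]

theorem count_edges_meeting_great_circle
    (k : ℕ) (hk : 3 ≤ k) (P : Set E3) (hPS : P ⊆ unitSphere)
    (hPfin : P.Finite) (hcard : P.ncard = k) (hgen : GenPos P)
    (p : E3) (hp : p ∈ P)
    (W : Submodule ℝ E3) (hW : Module.finrank ℝ W = 2) (hpW : p ∈ W)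
    (hWP : (W : Set E3) ∩ phat P = ({p, -p} : Set E3)) :
    Set.ncard {e : Sym2 E3 | ∃ a b, a ∈ phat P ∧ b ∈ phat P ∧ b ≠ a ∧ b ≠ -a ∧
        a ∉ ({p, -p} : Set E3) ∧ b ∉ ({p, -p} : Set E3) ∧
        (arc a b ∩ ((W : Set E3) ∩ unitSphere)).Nonempty ∧ e = s(a, b)} =
      (k - 1) * (k - 2) :=
  count_edges_meeting_great_circle_general k hk P hPS hcard hgen p hp W hW hWP

end
end

section
/- Let k ≥ 3 and let P ⊆ S² be a set of k points in general position with P̂ = P ∪ (−P). Suppose that for each p ∈ P a half-circle H_p with endpoints p and −p is chosen so that the half-circles H_p (p ∈ P) are pairwise disjoint and the great circle containing each H_p meets P̂ only in {p, −p}. Consider the drawing whose curves are: the arcs arc(a,b) for all edges {a,b} of P̂, and the half-circles H_p for p ∈ P. Then the total number of crossing pairs of curves (unordered pairs of distinct curves that share a point which is not an endpoint of either curve) equals (1/4)·k(k−1)²(k−2) = H(2k). -/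
open Set
open scoped RealInnerProductSpace

noncomputable section

/-!
Each arc of the drawing is the open cone spanned by signed representatives `±p`, `±q` of two
points of `P`, and `H_p` is the half of the great circle `span {p, v p}` on the side of `v p`.
General position, the disjointness of the half-circles and the hypothesis that the great circle
of `H_p` avoids the other points of `P̂` rule out every crossing except those of two arcs over
four distinct points `p, q, r, s`, and those of `H_p` with an arc over `r, s ≠ p`.

The planes `span {p, q}` and `span {r, s}` meet the sphere in an antipodal pair `±x` whose four
coordinates are all nonzero, so the arcs over `{p, q}` and over `{r, s}` form exactly two crossing
pairs, at `x` and at `-x`. An ordered arc–arc crossing is therefore determined by the signed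
endpoint `ε • p` of its first arc together with `q, r, s`, and it carries exactly four such labels
(swap `p, q`, swap `r, s`). Likewise `H_p` crosses exactly one arc over `{r, s}`, at whichever of
`±x` lies on its side, and this crossing carries the two labels `(p, r, s)` and `(p, s, r)`.
Double counting gives `k(k-1)(k-2)(k-3)/2` ordered arc–arc crossings and `k(k-1)(k-2)/2`
half-circle–arc crossings, hence `k(k-1)(k-2)(k-3)/4 + k(k-1)(k-2)/2 = k(k-1)²(k-2)/4` crossing
pairs.
-/

open Module Submodule

section Cones

variable {E : Type*} [AddCommGroup E] [Module ℝ E]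

def signs : Finset ℝ := {1, -1}

def posCone (a b : E) : Set E := {x | ∃ s t : ℝ, 0 < s ∧ 0 < t ∧ x = s • a + t • b}

lemma abs_of_mem_signs {ε : ℝ} (hε : ε ∈ signs) : |ε| = 1 := by
  simp only [signs, Finset.mem_insert, Finset.mem_singleton] at hε
  rcases hε with rfl | rfl <;> simp

lemma ne_zero_of_mem_signs {ε : ℝ} (hε : ε ∈ signs) : ε ≠ 0 := by
  rintro rfl
  simp [signs] at hε

lemma neg_mem_signs {ε : ℝ} (hε : ε ∈ signs) : -ε ∈ signs := by
  simp only [signs, Finset.mem_insert, Finset.mem_singleton] at hε ⊢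
  rcases hε with rfl | rfl <;> norm_num

lemma eq_neg_of_ne_of_mem_signs {ε δ : ℝ} (hε : ε ∈ signs) (hδ : δ ∈ signs) (h : ε ≠ δ) :
    δ = -ε := by
  simp only [signs, Finset.mem_insert, Finset.mem_singleton] at hε hδ
  rcases hε with rfl | rfl <;> rcases hδ with rfl | rfl <;> simp_all

lemma eq_of_mul_eq_mul_of_mem_signs {ε ε' s s' : ℝ} (hε : ε ∈ signs) (hε' : ε' ∈ signs)
    (hs : 0 < s) (hs' : 0 < s') (h : s * ε = s' * ε') : ε = ε' := by
  simp only [signs, Finset.mem_insert, Finset.mem_singleton] at hε hε'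
  rcases hε with rfl | rfl <;> rcases hε' with rfl | rfl <;> first | rfl | nlinarith

lemma exists_mem_signs_mul_eq {α : ℝ} (hα : α ≠ 0) : ∃ ε ∈ signs, ∃ s > 0, α = s * ε := by
  rcases hα.lt_or_gt with h | h
  · exact ⟨-1, by simp [signs], -α, by linarith, by ring⟩
  · exact ⟨1, by simp [signs], α, h, by ring⟩

lemma LinearIndependent.pair_smul {a b : E} (h : LinearIndependent ℝ ![a, b]) {ε δ : ℝ}
    (hε : ε ≠ 0) (hδ : δ ≠ 0) : LinearIndependent ℝ ![ε • a, δ • b] :=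
  LinearIndependent.pair_iff.mpr fun s t hst => by
    have := h.eq_zero_of_pair (s := s * ε) (t := t * δ) (by simpa [mul_smul] using hst)
    exact ⟨(mul_eq_zero.mp this.1).resolve_right hε, (mul_eq_zero.mp this.2).resolve_right hδ⟩

lemma finrank_span_pair {a b : E} (h : LinearIndependent ℝ ![a, b]) :
    finrank ℝ (span ℝ {a, b}) = 2 := by
  have := finrank_span_eq_card h
  rwa [Matrix.range_cons_cons_empty, Fintype.card_fin] at this

lemma coeff_ne_zero_of_mem {W : Submodule ℝ E} {p q : E} {α β : ℝ} (hq : q ∉ W)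
    (hx : α • p + β • q ∈ W) (hx0 : α • p + β • q ≠ 0) : α ≠ 0 := by
  rintro rfl
  rw [zero_smul, zero_add] at hx hx0
  exact hq ((W.smul_mem_iff (left_ne_zero_of_smul hx0)).mp hx)

lemma posCone_comm (a b : E) : posCone a b = posCone b a := by
  ext x
  constructor <;> rintro ⟨s, t, hs, ht, rfl⟩ <;> exact ⟨t, s, ht, hs, add_comm _ _⟩

lemma neg_mem_posCone_smul {a b x : E} {ε δ : ℝ} (hx : x ∈ posCone (ε • a) (δ • b)) :
    -x ∈ posCone ((-ε) • a) ((-δ) • b) := by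
  obtain ⟨s, t, hs, ht, rfl⟩ := hx
  exact ⟨s, t, hs, ht, by module⟩

lemma mem_span_pair_of_mem_posCone_smul {a b x : E} {ε δ : ℝ}
    (hx : x ∈ posCone (ε • a) (δ • b)) : x ∈ span ℝ {a, b} := by
  obtain ⟨s, t, -, -, rfl⟩ := hx
  exact mem_span_pair.mpr ⟨s * ε, t * δ, by simp only [mul_smul]⟩

lemma mem_of_mem_posCone {W : Submodule ℝ E} {a b x : E} (hx : x ∈ posCone a b) (hxW : x ∈ W)
    (haW : a ∈ W) : b ∈ W := by
  obtain ⟨s, t, -, ht, rfl⟩ := hx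
  have : t • b ∈ W := by simpa using W.sub_mem hxW (W.smul_mem s haW)
  exact (W.smul_mem_iff ht.ne').mp this

lemma exists_mem_posCone_of_ne_zero {p q x : E} {α β : ℝ} (hα : α ≠ 0) (hβ : β ≠ 0)
    (hx : x = α • p + β • q) : ∃ ε ∈ signs, ∃ δ ∈ signs, x ∈ posCone (ε • p) (δ • q) := by
  obtain ⟨ε, hε, s, hs, rfl⟩ := exists_mem_signs_mul_eq hα
  obtain ⟨δ, hδ, t, ht, rfl⟩ := exists_mem_signs_mul_eq hβ
  exact ⟨ε, hε, δ, hδ, s, t, hs, ht, by rw [hx, mul_smul, mul_smul]⟩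

lemma exists_mem_posCone_of_mem_span_pair {W : Submodule ℝ E} {p q x : E} (hp : p ∉ W)
    (hq : q ∉ W) (hx : x ∈ span ℝ {p, q}) (hxW : x ∈ W) (hx0 : x ≠ 0) :
    ∃ ε ∈ signs, ∃ δ ∈ signs, x ∈ posCone (ε • p) (δ • q) := by
  obtain ⟨α, β, rfl⟩ := mem_span_pair.mp hx
  refine exists_mem_posCone_of_ne_zero (coeff_ne_zero_of_mem hq hxW hx0) ?_ rfl
  rw [add_comm] at hxW hx0
  exact coeff_ne_zero_of_mem hp hxW hx0

lemma signs_eq_of_mem_posCone {a b x : E} {ε δ ε' δ' : ℝ} (hab : LinearIndependent ℝ ![a, b])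
    (hε : ε ∈ signs) (hδ : δ ∈ signs) (hε' : ε' ∈ signs) (hδ' : δ' ∈ signs)
    (hx : x ∈ posCone (ε • a) (δ • b)) (hx' : x ∈ posCone (ε' • a) (δ' • b)) :
    ε = ε' ∧ δ = δ' := by
  obtain ⟨s, t, hs, ht, rfl⟩ := hx
  obtain ⟨s', t', hs', ht', hx'⟩ := hx'
  simp only [smul_smul] at hx'
  obtain ⟨h1, h2⟩ := hab.eq_of_pair hx'
  exact ⟨eq_of_mul_eq_mul_of_mem_signs hε hε' hs hs' h1,
    eq_of_mul_eq_mul_of_mem_signs hδ hδ' ht ht' h2⟩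

end Cones

section Planes

variable {E : Type*} [NormedAddCommGroup E] [NormedSpace ℝ E] [FiniteDimensional ℝ E]

lemma exists_norm_eq_one_mem_inf {U W : Submodule ℝ E}
    (h : finrank ℝ E < finrank ℝ U + finrank ℝ W) : ∃ x ∈ U ⊓ W, ‖x‖ = 1 := by
  have hsup := Submodule.finrank_sup_add_finrank_inf_eq U W
  have hle := Submodule.finrank_le (U ⊔ W)
  obtain ⟨x, hx, hx0⟩ := (U ⊓ W).ne_bot_iff.mp fun h0 => by
    rw [h0, finrank_bot] at hsup
    omega
  exact ⟨‖x‖⁻¹ • x, (U ⊓ W).smul_mem _ hx, norm_smul_inv_norm hx0⟩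

lemma eq_or_eq_neg_of_mem_inf {U W : Submodule ℝ E} (hU : finrank ℝ U = 2) (hUW : ¬U ≤ W)
    {x y : E} (hx : x ∈ U ⊓ W) (hy : y ∈ U ⊓ W) (hnx : ‖x‖ = 1) (hny : ‖y‖ = 1) :
    y = x ∨ y = -x := by
  have hx0 : x ≠ 0 := by rintro rfl; simp at hnx
  obtain ⟨c, rfl⟩ : ∃ c : ℝ, c • x = y := by
    by_contra! hc
    have h1 : finrank ℝ (span ℝ {x, y}) ≤ finrank ℝ (U ⊓ W : Submodule ℝ E) :=
      Submodule.finrank_mono (span_le.mpr (Set.pair_subset_iff.mpr ⟨hx, hy⟩))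
    have h2 := Submodule.finrank_lt_finrank_of_lt (inf_lt_left.mpr hUW)
    rw [finrank_span_pair ((LinearIndependent.pair_iff' hx0).mpr hc)] at h1
    omega
  have : |c| = 1 := by simpa [norm_smul, hnx] using hny
  rcases (abs_eq zero_le_one).mp this with rfl | rfl <;> simp

end Planes

section InnerProduct

variable {F : Type*} [NormedAddCommGroup F] [InnerProductSpace ℝ F]

lemma norm_smul_add_smul_sq {p v : F} (hp : ‖p‖ = 1) (hv : ‖v‖ = 1) (hpv : ⟪p, v⟫ = 0)
    (α β : ℝ) : ‖α • p + β • v‖ ^ 2 = α ^ 2 + β ^ 2 := by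
  rw [sq, norm_add_sq_eq_norm_sq_add_norm_sq_real (by simp [real_inner_smul_left,
    real_inner_smul_right, hpv]), norm_smul, norm_smul, hp, hv]
  simp [sq]

lemma inner_smul_add_smul_right {p v : F} (hv : ‖v‖ = 1) (hpv : ⟪p, v⟫ = 0) (α β : ℝ) :
    ⟪α • p + β • v, v⟫ = β := by
  simp [inner_add_left, real_inner_smul_left, hpv, hv]

lemma linearIndependent_pair_of_inner_eq_zero {p w : F} (hp : ‖p‖ = 1) (hw : ‖w‖ = 1)
    (hpw : ⟪p, w⟫ = 0) : LinearIndependent ℝ ![p, w] :=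
  LinearIndependent.pair_iff.mpr fun s t hst => by
    have h1 := congrArg (⟪·, p⟫) hst
    have h2 := congrArg (⟪·, w⟫) hst
    simp only [inner_add_left, real_inner_smul_left, real_inner_self_eq_norm_sq, hp, hw,
      real_inner_comm p w, hpw, inner_zero_left] at h1 h2
    constructor <;> linarith

end InnerProduct

section Sphere

lemma arc_subset_arc_swap (a b : E3) : arc a b ⊆ arc b a := by
  rintro x ⟨t, ⟨ht0, ht1⟩, rfl⟩
  exact ⟨1 - t, ⟨by linarith, by linarith⟩, by rw [sub_sub_cancel, add_comm]⟩

lemma arc_comm (a b : E3) : arc a b = arc b a :=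
  (arc_subset_arc_swap a b).antisymm (arc_subset_arc_swap b a)

lemma arc_diff_endpoints {a b : E3} (ha : ‖a‖ = 1) (hb : ‖b‖ = 1)
    (hab : LinearIndependent ℝ ![a, b]) : arc a b \ {a, b} = unitSphere ∩ posCone a b := by
  ext x
  simp only [Set.mem_sdiff, Set.mem_insert_iff, Set.mem_singleton_iff, not_or, Set.mem_inter_iff,
    unitSphere, Set.mem_ofPred_eq]
  constructor
  · rintro ⟨⟨t, ⟨ht0, ht1⟩, rfl⟩, hxa, hxb⟩
    set u := (1 - t) • a + t • b
    have hu : u ≠ 0 := fun h => by linarith [hab.eq_zero_of_pair h]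
    have ht0' : t ≠ 0 := by rintro rfl; exact hxa (by simp [u, ha])
    have ht1' : t ≠ 1 := by rintro rfl; exact hxb (by simp [u, hb])
    have hu' : 0 < ‖u‖⁻¹ := inv_pos.mpr (norm_pos_iff.mpr hu)
    refine ⟨norm_smul_inv_norm hu, ‖u‖⁻¹ * (1 - t), ‖u‖⁻¹ * t,
      mul_pos hu' (sub_pos.mpr (lt_of_le_of_ne ht1 ht1')),
      mul_pos hu' (lt_of_le_of_ne ht0 (Ne.symm ht0')), by simp only [u, smul_add, smul_smul]⟩
  · rintro ⟨hx, s, t, hs, ht, rfl⟩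
    have hst : 0 < s + t := by linarith
    have hu : (1 - t / (s + t)) • a + (t / (s + t)) • b = (s + t)⁻¹ • (s • a + t • b) := by
      match_scalars
      · field_simp
        ring
      · field_simp
    refine ⟨⟨t / (s + t), ⟨by positivity, (div_le_one hst).mpr (by linarith)⟩, ?_⟩, ?_, ?_⟩
    · rw [hu, norm_smul, hx, mul_one, norm_inv, Real.norm_of_nonneg hst.le, inv_inv, smul_smul,
        mul_inv_cancel₀ hst.ne', one_smul]
    · intro h
      linarith [(hab.eq_of_pair (s' := 1) (t' := 0) (by rw [h]; simp)).2]
    · intro h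
      linarith [(hab.eq_of_pair (s' := 0) (t' := 1) (by rw [h]; simp)).1]

lemma halfCircle_diff_endpoints {p v : E3} (hp : ‖p‖ = 1) (hv : ‖v‖ = 1) (hpv : ⟪p, v⟫ = 0) :
    halfCircle p v \ {p, -p} = {x | ‖x‖ = 1 ∧ x ∈ span ℝ {p, v} ∧ 0 < ⟪x, v⟫} := by
  ext x
  simp only [Set.mem_sdiff, Set.mem_insert_iff, Set.mem_singleton_iff, not_or, Set.mem_ofPred_eq]
  constructor
  · rintro ⟨⟨t, ⟨ht0, htπ⟩, rfl⟩, hxp, hxn⟩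
    have ht0' : t ≠ 0 := by rintro rfl; simp at hxp
    have htπ' : t ≠ Real.pi := by rintro rfl; simp at hxn
    refine ⟨?_, mem_span_pair.mpr ⟨_, _, rfl⟩, ?_⟩
    · have := norm_smul_add_smul_sq hp hv hpv (Real.cos t) (Real.sin t)
      rw [Real.cos_sq_add_sin_sq] at this
      nlinarith [norm_nonneg (Real.cos t • p + Real.sin t • v)]
    · rw [inner_smul_add_smul_right hv hpv]
      exact Real.sin_pos_of_pos_of_lt_pi (lt_of_le_of_ne ht0 (Ne.symm ht0'))
        (lt_of_le_of_ne htπ htπ')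
  · rintro ⟨hx, hxs, hxv⟩
    obtain ⟨α, β, rfl⟩ := mem_span_pair.mp hxs
    rw [inner_smul_add_smul_right hv hpv] at hxv
    have h1 : α ^ 2 + β ^ 2 = 1 := by rw [← norm_smul_add_smul_sq hp hv hpv, hx, one_pow]
    have hα : -1 ≤ α ∧ α ≤ 1 := by constructor <;> nlinarith
    refine ⟨⟨Real.arccos α, ⟨Real.arccos_nonneg α, Real.arccos_le_pi α⟩, ?_⟩, ?_, ?_⟩
    · rw [Real.cos_arccos hα.1 hα.2, Real.sin_arccos,
        show 1 - α ^ 2 = β ^ 2 by linarith, Real.sqrt_sq hxv.le]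
    · intro h
      have := inner_smul_add_smul_right hv hpv α β
      rw [h, hpv] at this
      linarith
    · intro h
      have := inner_smul_add_smul_right hv hpv α β
      rw [h, inner_neg_left, hpv] at this
      linarith

lemma exists_norm_eq_one_mem_span_pair_inf {a b c d : E3} (hab : LinearIndependent ℝ ![a, b])
    (hcd : LinearIndependent ℝ ![c, d]) : ∃ x ∈ span ℝ {a, b} ⊓ span ℝ {c, d}, ‖x‖ = 1 :=
  exists_norm_eq_one_mem_inf (by
    rw [finrank_span_pair hab, finrank_span_pair hcd, finrank_euclideanSpace_fin]
    norm_num)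

end Sphere

section GeneralPosition

variable {P : Set E3}

lemma GenPos.notMem_span_pair (hgen : GenPos P) {a b c : E3} (ha : a ∈ P) (hb : b ∈ P)
    (hc : c ∈ P) (hab : a ≠ b) (hac : a ≠ c) (hbc : b ≠ c) : a ∉ span ℝ {b, c} := by
  have := (linearIndependent_finCons.mp (hgen a ha b hb c hc hab hac hbc)).2
  rwa [Matrix.range_cons_cons_empty] at this

lemma exists_mem_ne_ne {α : Type*} {s : Set α} (h3 : 2 < s.ncard) (a b : α) :
    ∃ c ∈ s, c ≠ a ∧ c ≠ b := by
  by_contra! hc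
  have hsub : s ⊆ {a, b} := fun c hcs => by
    by_cases hca : c = a
    · exact Or.inl hca
    · exact Or.inr (hc c hcs hca)
  have := (Set.ncard_le_ncard hsub (Set.toFinite _)).trans (Set.ncard_insert_le a {b})
  rw [Set.ncard_singleton] at this
  omega

lemma GenPos.linearIndependent_pair_s13 (hgen : GenPos P) (h3 : 2 < P.ncard) {p q : E3} (hp : p ∈ P)
    (hq : q ∈ P) (hpq : p ≠ q) : LinearIndependent ℝ ![p, q] := by
  obtain ⟨r, hr, hrp, hrq⟩ := exists_mem_ne_ne h3 p q
  exact (linearIndependent_finCons.mp (hgen r hr p hp q hq hrp hrq hpq)).1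

lemma neg_notMem (hPS : P ⊆ unitSphere) (hgen : GenPos P) (h3 : 2 < P.ncard) {p : E3}
    (hp : p ∈ P) : -p ∉ P := by
  intro hnp
  have hp0 : p ≠ 0 := by
    rintro rfl
    simpa [unitSphere] using hPS hp
  have hpn : p ≠ -p := fun h => hp0 (by linear_combination (norm := module) (1 / 2 : ℝ) • h)
  obtain ⟨r, hr, hrp, hrn⟩ := exists_mem_ne_ne h3 p (-p)
  refine hgen.notMem_span_pair hp hnp hr hpn hrp.symm hrn.symm ?_
  simpa using (span ℝ {-p, r}).neg_mem (subset_span (Set.mem_insert (-p) {r}))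

lemma smul_eq_smul_iff_of_mem_signs (hPS : P ⊆ unitSphere) (hgen : GenPos P) (h3 : 2 < P.ncard)
    {p q : E3} (hp : p ∈ P) (hq : q ∈ P) {ε δ : ℝ} (hε : ε ∈ signs) (hδ : δ ∈ signs) :
    ε • p = δ • q ↔ ε = δ ∧ p = q := by
  refine ⟨fun h => ?_, fun ⟨h1, h2⟩ => by rw [h1, h2]⟩
  simp only [signs, Finset.mem_insert, Finset.mem_singleton] at hε hδ
  rcases hε with rfl | rfl <;> rcases hδ with rfl | rfl
  all_goals simp only [one_smul, neg_smul, neg_inj] at h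
  · exact ⟨rfl, h⟩
  · exact absurd (h ▸ hp) (neg_notMem hPS hgen h3 hq)
  · exact absurd (h ▸ hq) (neg_notMem hPS hgen h3 hp)
  · exact ⟨rfl, h⟩

lemma eq_of_smul_pair_eq_smul_pair (hPS : P ⊆ unitSphere) (hgen : GenPos P) (h3 : 2 < P.ncard)
    {p q p₀ q₀ : E3} (hp : p ∈ P) (hq : q ∈ P) (hp₀ : p₀ ∈ P) (hq₀ : q₀ ∈ P) {ε δ ε₀ δ₀ : ℝ}
    (hε : ε ∈ signs) (hδ : δ ∈ signs) (hε₀ : ε₀ ∈ signs) (hδ₀ : δ₀ ∈ signs)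
    (h : ({ε • p, δ • q} : Set E3) = {ε₀ • p₀, δ₀ • q₀}) :
    (ε = ε₀ ∧ p = p₀ ∧ δ = δ₀ ∧ q = q₀) ∨ (ε = δ₀ ∧ p = q₀ ∧ δ = ε₀ ∧ q = p₀) := by
  rcases Set.pair_eq_pair_iff.mp h with ⟨h1, h2⟩ | ⟨h1, h2⟩
  · obtain ⟨rfl, rfl⟩ := (smul_eq_smul_iff_of_mem_signs hPS hgen h3 hp hp₀ hε hε₀).mp h1
    obtain ⟨rfl, rfl⟩ := (smul_eq_smul_iff_of_mem_signs hPS hgen h3 hq hq₀ hδ hδ₀).mp h2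
    exact Or.inl ⟨rfl, rfl, rfl, rfl⟩
  · obtain ⟨rfl, rfl⟩ := (smul_eq_smul_iff_of_mem_signs hPS hgen h3 hp hq₀ hε hδ₀).mp h1
    obtain ⟨rfl, rfl⟩ := (smul_eq_smul_iff_of_mem_signs hPS hgen h3 hq hp₀ hδ hε₀).mp h2
    exact Or.inr ⟨rfl, rfl, rfl, rfl⟩

lemma mem_phat_iff {a : E3} : a ∈ phat P ↔ ∃ ε ∈ signs, ∃ p ∈ P, a = ε • p := by
  simp only [phat, signs, Set.mem_union, Set.mem_image, Finset.mem_insert, Finset.mem_singleton]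
  constructor
  · rintro (ha | ⟨p, hp, rfl⟩)
    · exact ⟨1, Or.inl rfl, a, ha, (one_smul ℝ a).symm⟩
    · exact ⟨-1, Or.inr rfl, p, hp, by simp⟩
  · rintro ⟨ε, rfl | rfl, p, hp, rfl⟩
    · exact Or.inl (by simpa using hp)
    · exact Or.inr ⟨p, hp, by simp⟩

lemma notMem_span_of_inter_phat (hPS : P ⊆ unitSphere) (hgen : GenPos P) (h3 : 2 < P.ncard)
    {p s w : E3} (hp : p ∈ P) (hs : s ∈ P) (hsp : s ≠ p)
    (hgc : ((span ℝ {p, w} : Set E3) ∩ unitSphere) ∩ phat P = {p, -p}) :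
    s ∉ span ℝ {p, w} := by
  intro hsW
  have : s ∈ ({p, -p} : Set E3) := hgc ▸ ⟨⟨hsW, hPS hs⟩, Or.inl hs⟩
  rcases this with rfl | rfl
  · exact hsp rfl
  · exact neg_notMem hPS hgen h3 hp hs

end GeneralPosition

section Curves

variable {P : Set E3} {v : E3 → E3}

def arcCurve (a b : E3) : Curve := (arc a b, {a, b})

def halfCircleCurve (p w : E3) : Curve := (halfCircle p w, {p, -p})

lemma arcCurve_comm (a b : E3) : arcCurve a b = arcCurve b a := by
  rw [arcCurve, arcCurve, arc_comm, Set.pair_comm]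

lemma mem_drawingCurves_iff (hPS : P ⊆ unitSphere) (hgen : GenPos P) (h3 : 2 < P.ncard)
    {c : Curve} : c ∈ drawingCurves P v P ↔
      (∃ ε ∈ signs, ∃ δ ∈ signs, ∃ p ∈ P, ∃ q ∈ P, p ≠ q ∧ c = arcCurve (ε • p) (δ • q)) ∨
        ∃ p ∈ P, c = halfCircleCurve p (v p) := by
  refine or_congr ⟨?_, ?_⟩ Iff.rfl
  · rintro ⟨a, b, ha, hb, hba, hbna, rfl⟩
    obtain ⟨ε, hε, p, hp, rfl⟩ := mem_phat_iff.mp ha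
    obtain ⟨δ, hδ, q, hq, rfl⟩ := mem_phat_iff.mp hb
    refine ⟨ε, hε, δ, hδ, p, hp, q, hq, ?_, rfl⟩
    rintro rfl
    rcases eq_or_ne δ ε with rfl | h
    · exact hba rfl
    · exact hbna (by rw [eq_neg_of_ne_of_mem_signs hε hδ h.symm, neg_smul])
  · rintro ⟨ε, hε, δ, hδ, p, hp, q, hq, hpq, rfl⟩
    have hne : ∀ η ∈ signs, δ • q ≠ η • p := fun η hη h =>
      hpq ((smul_eq_smul_iff_of_mem_signs hPS hgen h3 hq hp hδ hη).mp h).2.symm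
    exact ⟨ε • p, δ • q, mem_phat_iff.mpr ⟨ε, hε, p, hp, rfl⟩,
      mem_phat_iff.mpr ⟨δ, hδ, q, hq, rfl⟩, hne ε hε, by
        rw [← neg_smul]; exact hne (-ε) (neg_mem_signs hε), rfl⟩

lemma arcCurve_ne_halfCircleCurve (hPS : P ⊆ unitSphere) (hgen : GenPos P) (h3 : 2 < P.ncard)
    {p q t : E3} (hp : p ∈ P) (hq : q ∈ P) (ht : t ∈ P) (hpq : p ≠ q) {ε δ : ℝ}
    (hε : ε ∈ signs) (hδ : δ ∈ signs) (w : E3) :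
    arcCurve (ε • p) (δ • q) ≠ halfCircleCurve t w := by
  intro h
  have h' : ({ε • p, δ • q} : Set E3) = {(1 : ℝ) • t, (-1 : ℝ) • t} := by
    simpa [arcCurve, halfCircleCurve] using congrArg Prod.snd h
  rcases eq_of_smul_pair_eq_smul_pair hPS hgen h3 hp hq ht ht hε hδ (by simp [signs])
    (by simp [signs]) h' with ⟨-, rfl, -, rfl⟩ | ⟨-, rfl, -, rfl⟩ <;> exact hpq rfl

lemma halfCircleCurve_inj (hPS : P ⊆ unitSphere) (hgen : GenPos P) (h3 : 2 < P.ncard)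
    {p q w w' : E3} (hp : p ∈ P) (hq : q ∈ P) (h : halfCircleCurve p w = halfCircleCurve q w') :
    p = q := by
  rcases Set.pair_eq_pair_iff.mp (congrArg Prod.snd h) with ⟨h1, -⟩ | ⟨h1, -⟩
  · exact h1
  · exact absurd (h1 ▸ hp) (neg_notMem hPS hgen h3 hq)

lemma drawingCurves_finite (hP : P.Finite) : (drawingCurves P v P).Finite := by
  have hV : (phat P).Finite := hP.union (hP.image _)
  refine (((hV.prod hV).image fun ab => arcCurve ab.1 ab.2).union
    (hP.image fun p => halfCircleCurve p (v p))).subset ?_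
  rintro c (⟨a, b, ha, hb, -, -, rfl⟩ | ⟨p, hp, rfl⟩)
  · exact Or.inl ⟨(a, b), ⟨ha, hb⟩, rfl⟩
  · exact Or.inr ⟨p, hp, rfl⟩

def IsHalfCircleOf (P : Set E3) (v : E3 → E3) (c : Curve) : Prop :=
  ∃ p ∈ P, c = halfCircleCurve p (v p)

end Curves

section Crossings

variable {P : Set E3}

def Crosses (c d : Curve) : Prop := ∃ x, x ∈ c.1 ∧ x ∈ d.1 ∧ x ∉ c.2 ∧ x ∉ d.2

lemma crosses_iff {c d : Curve} : Crosses c d ↔ ∃ x, x ∈ c.1 \ c.2 ∧ x ∈ d.1 \ d.2 := by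
  simp only [Crosses, Set.mem_sdiff]
  exact exists_congr fun x => by tauto

lemma Crosses.symm {c d : Curve} (h : Crosses c d) : Crosses d c := by
  obtain ⟨x, h1, h2, h3, h4⟩ := h
  exact ⟨x, h2, h1, h4, h3⟩

lemma norm_smul_of_mem_signs {ε : ℝ} {p : E3} (hε : ε ∈ signs) (hp : ‖p‖ = 1) : ‖ε • p‖ = 1 := by
  rw [norm_smul, Real.norm_eq_abs, abs_of_mem_signs hε, hp, one_mul]

lemma arcCurve_diff (hPS : P ⊆ unitSphere) (hgen : GenPos P) (h3 : 2 < P.ncard) {p q : E3}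
    (hp : p ∈ P) (hq : q ∈ P) (hpq : p ≠ q) {ε δ : ℝ} (hε : ε ∈ signs) (hδ : δ ∈ signs) :
    (arcCurve (ε • p) (δ • q)).1 \ (arcCurve (ε • p) (δ • q)).2 =
      unitSphere ∩ posCone (ε • p) (δ • q) :=
  arc_diff_endpoints (norm_smul_of_mem_signs hε (hPS hp)) (norm_smul_of_mem_signs hδ (hPS hq))
    ((hgen.linearIndependent_pair_s13 h3 hp hq hpq).pair_smul (ne_zero_of_mem_signs hε)
      (ne_zero_of_mem_signs hδ))

lemma crosses_arcCurve_iff (hPS : P ⊆ unitSphere) (hgen : GenPos P) (h3 : 2 < P.ncard)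
    {p q r s : E3} (hp : p ∈ P) (hq : q ∈ P) (hr : r ∈ P) (hs : s ∈ P) (hpq : p ≠ q)
    (hrs : r ≠ s) {ε δ ε' δ' : ℝ} (hε : ε ∈ signs) (hδ : δ ∈ signs) (hε' : ε' ∈ signs)
    (hδ' : δ' ∈ signs) :
    Crosses (arcCurve (ε • p) (δ • q)) (arcCurve (ε' • r) (δ' • s)) ↔
      ∃ x, ‖x‖ = 1 ∧ x ∈ posCone (ε • p) (δ • q) ∧ x ∈ posCone (ε' • r) (δ' • s) := by
  rw [crosses_iff, arcCurve_diff hPS hgen h3 hp hq hpq hε hδ,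
    arcCurve_diff hPS hgen h3 hr hs hrs hε' hδ']
  exact exists_congr fun x => ⟨fun ⟨⟨h1, h2⟩, _, h3⟩ => ⟨h1, h2, h3⟩,
    fun ⟨h1, h2, h3⟩ => ⟨⟨h1, h2⟩, h1, h3⟩⟩

lemma crosses_halfCircleCurve_arcCurve_iff (hPS : P ⊆ unitSphere) (hgen : GenPos P)
    (h3 : 2 < P.ncard) {p r s w : E3} (hp : p ∈ P) (hr : r ∈ P) (hs : s ∈ P) (hrs : r ≠ s)
    (hw : ‖w‖ = 1 ∧ ⟪p, w⟫ = 0) {ε δ : ℝ} (hε : ε ∈ signs) (hδ : δ ∈ signs) :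
    Crosses (halfCircleCurve p w) (arcCurve (ε • r) (δ • s)) ↔
      ∃ x, ‖x‖ = 1 ∧ x ∈ span ℝ {p, w} ∧ 0 < ⟪x, w⟫ ∧ x ∈ posCone (ε • r) (δ • s) := by
  rw [crosses_iff, halfCircleCurve, halfCircle_diff_endpoints (hPS hp) hw.1 hw.2,
    arcCurve_diff hPS hgen h3 hr hs hrs hε hδ]
  exact exists_congr fun x => ⟨fun ⟨⟨h1, h2, h3⟩, _, h4⟩ => ⟨h1, h2, h3, h4⟩,
    fun ⟨h1, h2, h3, h4⟩ => ⟨⟨h1, h2, h3⟩, h1, h4⟩⟩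

lemma GenPos.notMem_posCone_of_mem_posCone (hgen : GenPos P) {p q s x : E3} (hp : p ∈ P)
    (hq : q ∈ P) (hs : s ∈ P) (hpq : p ≠ q) (hps : p ≠ s) (hqs : q ≠ s) {ε δ ε' δ' : ℝ}
    (hδ : δ ≠ 0) (hx : x ∈ posCone (ε • p) (δ • q)) : x ∉ posCone (ε' • p) (δ' • s) := by
  intro hx'
  have := mem_of_mem_posCone hx (mem_span_pair_of_mem_posCone_smul hx')
    (smul_mem _ _ (subset_span (Set.mem_insert p {s})))
  exact hgen.notMem_span_pair hq hp hs hpq.symm hqs hps ((smul_mem_iff _ hδ).mp this)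

lemma GenPos.eq_or_swap_or_disjoint_of_mem_posCone (hgen : GenPos P) {p q r s x : E3}
    (hp : p ∈ P) (hq : q ∈ P) (hr : r ∈ P) (hs : s ∈ P) (hpq : p ≠ q) (hrs : r ≠ s)
    {ε δ ε' δ' : ℝ} (hε : ε ≠ 0) (hδ : δ ≠ 0) (hx : x ∈ posCone (ε • p) (δ • q))
    (hx' : x ∈ posCone (ε' • r) (δ' • s)) :
    (p = r ∧ q = s) ∨ (p = s ∧ q = r) ∨ (p ≠ r ∧ p ≠ s ∧ q ≠ r ∧ q ≠ s) := by
  have hxc := posCone_comm (ε • p) (δ • q) ▸ hx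
  have hxc' := posCone_comm (ε' • r) (δ' • s) ▸ hx'
  by_cases hpr : p = r
  · subst hpr
    by_cases hqs : q = s
    · exact Or.inl ⟨rfl, hqs⟩
    · exact (hgen.notMem_posCone_of_mem_posCone hp hq hs hpq hrs hqs hδ hx hx').elim
  by_cases hps : p = s
  · subst hps
    by_cases hqr : q = r
    · exact Or.inr (Or.inl ⟨rfl, hqr⟩)
    · exact (hgen.notMem_posCone_of_mem_posCone hp hq hr hpq hrs.symm hqr hδ hx hxc').elim
  by_cases hqr : q = r
  · subst hqr
    exact (hgen.notMem_posCone_of_mem_posCone hq hp hs hpq.symm hrs hps hε hxc hx').elim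
  by_cases hqs : q = s
  · subst hqs
    exact (hgen.notMem_posCone_of_mem_posCone hq hp hr hpq.symm hrs.symm hpr hε hxc hxc').elim
  exact Or.inr (Or.inr ⟨hpr, hps, hqr, hqs⟩)

lemma distinct_of_crosses_arcCurve (hPS : P ⊆ unitSphere) (hgen : GenPos P) (h3 : 2 < P.ncard)
    {p q r s : E3} (hp : p ∈ P) (hq : q ∈ P) (hr : r ∈ P) (hs : s ∈ P) (hpq : p ≠ q)
    (hrs : r ≠ s) {ε δ ε' δ' : ℝ} (hε : ε ∈ signs) (hδ : δ ∈ signs) (hε' : ε' ∈ signs)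
    (hδ' : δ' ∈ signs) (hne : arcCurve (ε • p) (δ • q) ≠ arcCurve (ε' • r) (δ' • s))
    (h : Crosses (arcCurve (ε • p) (δ • q)) (arcCurve (ε' • r) (δ' • s))) :
    p ≠ r ∧ p ≠ s ∧ q ≠ r ∧ q ≠ s := by
  obtain ⟨x, -, hx, hx'⟩ :=
    (crosses_arcCurve_iff hPS hgen h3 hp hq hr hs hpq hrs hε hδ hε' hδ').mp h
  have hli := hgen.linearIndependent_pair_s13 h3 hp hq hpq
  rcases hgen.eq_or_swap_or_disjoint_of_mem_posCone hp hq hr hs hpq hrs (ne_zero_of_mem_signs hε)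
    (ne_zero_of_mem_signs hδ) hx hx' with ⟨rfl, rfl⟩ | ⟨rfl, rfl⟩ | h
  · obtain ⟨rfl, rfl⟩ := signs_eq_of_mem_posCone hli hε hδ hε' hδ' hx hx'
    exact (hne rfl).elim
  · rw [posCone_comm] at hx'
    obtain ⟨rfl, rfl⟩ := signs_eq_of_mem_posCone hli hε hδ hδ' hε' hx hx'
    exact (hne (arcCurve_comm _ _)).elim
  · exact h

lemma ne_of_crosses_halfCircleCurve (hPS : P ⊆ unitSphere) (hgen : GenPos P) (h3 : 2 < P.ncard)
    {p r s w : E3} (hp : p ∈ P) (hr : r ∈ P) (hs : s ∈ P) (hrs : r ≠ s)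
    (hw : ‖w‖ = 1 ∧ ⟪p, w⟫ = 0)
    (hgc : ((span ℝ {p, w} : Set E3) ∩ unitSphere) ∩ phat P = {p, -p}) {ε δ : ℝ}
    (hε : ε ∈ signs) (hδ : δ ∈ signs)
    (h : Crosses (halfCircleCurve p w) (arcCurve (ε • r) (δ • s))) : p ≠ r ∧ p ≠ s := by
  obtain ⟨x, -, hxW, -, hx⟩ :=
    (crosses_halfCircleCurve_arcCurve_iff hPS hgen h3 hp hr hs hrs hw hε hδ).mp h
  have hpW : ∀ {ε : ℝ}, ε • p ∈ span ℝ {p, w} :=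
    smul_mem _ _ (subset_span (Set.mem_insert p {w}))
  constructor
  · rintro rfl
    exact notMem_span_of_inter_phat hPS hgen h3 hp hs hrs.symm hgc
      ((smul_mem_iff _ (ne_zero_of_mem_signs hδ)).mp (mem_of_mem_posCone hx hxW hpW))
  · rintro rfl
    rw [posCone_comm] at hx
    exact notMem_span_of_inter_phat hPS hgen h3 hp hr hrs hgc
      ((smul_mem_iff _ (ne_zero_of_mem_signs hε)).mp (mem_of_mem_posCone hx hxW hpW))

lemma exists_crosses_arcCurve (hPS : P ⊆ unitSphere) (hgen : GenPos P) (h3 : 2 < P.ncard)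
    {p q r s : E3} (hp : p ∈ P) (hq : q ∈ P) (hr : r ∈ P) (hs : s ∈ P) (hpq : p ≠ q)
    (hpr : p ≠ r) (hps : p ≠ s) (hqr : q ≠ r) (hqs : q ≠ s) (hrs : r ≠ s) {ε : ℝ}
    (hε : ε ∈ signs) : ∃ δ ∈ signs, ∃ ε' ∈ signs, ∃ δ' ∈ signs,
      Crosses (arcCurve (ε • p) (δ • q)) (arcCurve (ε' • r) (δ' • s)) := by
  obtain ⟨x, hx, hx1⟩ := exists_norm_eq_one_mem_span_pair_inf
    (hgen.linearIndependent_pair_s13 h3 hp hq hpq) (hgen.linearIndependent_pair_s13 h3 hr hs hrs)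
  have hx0 : x ≠ 0 := by rintro rfl; simp at hx1
  obtain ⟨ε₁, hε₁, δ₁, hδ₁, hxpq⟩ := exists_mem_posCone_of_mem_span_pair
    (hgen.notMem_span_pair hp hr hs hpr hps hrs) (hgen.notMem_span_pair hq hr hs hqr hqs hrs)
    hx.1 hx.2 hx0
  obtain ⟨ε₂, hε₂, δ₂, hδ₂, hxrs⟩ := exists_mem_posCone_of_mem_span_pair
    (hgen.notMem_span_pair hr hp hq hpr.symm hqr.symm hpq)
    (hgen.notMem_span_pair hs hp hq hps.symm hqs.symm hpq) hx.2 hx.1 hx0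
  rcases eq_or_ne ε₁ ε with rfl | hne
  · exact ⟨δ₁, hδ₁, ε₂, hε₂, δ₂, hδ₂, (crosses_arcCurve_iff hPS hgen h3 hp hq hr hs hpq hrs
      hε₁ hδ₁ hε₂ hδ₂).mpr ⟨x, hx1, hxpq, hxrs⟩⟩
  · rw [eq_neg_of_ne_of_mem_signs hε₁ hε hne]
    exact ⟨-δ₁, neg_mem_signs hδ₁, -ε₂, neg_mem_signs hε₂, -δ₂, neg_mem_signs hδ₂,
      (crosses_arcCurve_iff hPS hgen h3 hp hq hr hs hpq hrs (neg_mem_signs hε₁)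
        (neg_mem_signs hδ₁) (neg_mem_signs hε₂) (neg_mem_signs hδ₂)).mpr
        ⟨-x, by rw [norm_neg, hx1], neg_mem_posCone_smul hxpq, neg_mem_posCone_smul hxrs⟩⟩

lemma signs_eq_of_crosses_arcCurve (hPS : P ⊆ unitSphere) (hgen : GenPos P) (h3 : 2 < P.ncard)
    {p q r s : E3} (hp : p ∈ P) (hq : q ∈ P) (hr : r ∈ P) (hs : s ∈ P) (hpq : p ≠ q)
    (hpr : p ≠ r) (hps : p ≠ s) (hrs : r ≠ s) {ε δ ε' δ' δ₂ ε₂' δ₂' : ℝ} (hε : ε ∈ signs)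
    (hδ : δ ∈ signs) (hε' : ε' ∈ signs) (hδ' : δ' ∈ signs) (hδ₂ : δ₂ ∈ signs)
    (hε₂' : ε₂' ∈ signs) (hδ₂' : δ₂' ∈ signs)
    (h : Crosses (arcCurve (ε • p) (δ • q)) (arcCurve (ε' • r) (δ' • s)))
    (h₂ : Crosses (arcCurve (ε • p) (δ₂ • q)) (arcCurve (ε₂' • r) (δ₂' • s))) :
    δ = δ₂ ∧ ε' = ε₂' ∧ δ' = δ₂' := by
  obtain ⟨x, hx1, hx, hx'⟩ :=
    (crosses_arcCurve_iff hPS hgen h3 hp hq hr hs hpq hrs hε hδ hε' hδ').mp h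
  obtain ⟨y, hy1, hy, hy'⟩ :=
    (crosses_arcCurve_iff hPS hgen h3 hp hq hr hs hpq hrs hε hδ₂ hε₂' hδ₂').mp h₂
  have hli := hgen.linearIndependent_pair_s13 h3 hp hq hpq
  have hli' := hgen.linearIndependent_pair_s13 h3 hr hs hrs
  rcases eq_or_eq_neg_of_mem_inf (finrank_span_pair hli)
    (fun hle => hgen.notMem_span_pair hp hr hs hpr hps hrs (hle (subset_span (by simp))))
    ⟨mem_span_pair_of_mem_posCone_smul hx, mem_span_pair_of_mem_posCone_smul hx'⟩
    ⟨mem_span_pair_of_mem_posCone_smul hy, mem_span_pair_of_mem_posCone_smul hy'⟩ hx1 hy1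
    with rfl | rfl
  · exact ⟨(signs_eq_of_mem_posCone hli hε hδ hε hδ₂ hx hy).2,
      signs_eq_of_mem_posCone hli' hε' hδ' hε₂' hδ₂' hx' hy'⟩
  · have := (signs_eq_of_mem_posCone hli hε hδ (neg_mem_signs hε) (neg_mem_signs hδ₂) hx
      (by simpa using neg_mem_posCone_smul hy)).1
    exact absurd (by linarith : ε = 0) (ne_zero_of_mem_signs hε)

lemma exists_crosses_halfCircleCurve (hPS : P ⊆ unitSphere) (hgen : GenPos P) (h3 : 2 < P.ncard)
    {p r s w : E3} (hp : p ∈ P) (hr : r ∈ P) (hs : s ∈ P) (hpr : p ≠ r) (hps : p ≠ s)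
    (hrs : r ≠ s) (hw : ‖w‖ = 1 ∧ ⟪p, w⟫ = 0)
    (hgc : ((span ℝ {p, w} : Set E3) ∩ unitSphere) ∩ phat P = {p, -p}) :
    ∃ ε ∈ signs, ∃ δ ∈ signs, Crosses (halfCircleCurve p w) (arcCurve (ε • r) (δ • s)) := by
  obtain ⟨x, hx, hx1⟩ := exists_norm_eq_one_mem_span_pair_inf
    (linearIndependent_pair_of_inner_eq_zero (hPS hp) hw.1 hw.2)
    (hgen.linearIndependent_pair_s13 h3 hr hs hrs)
  have hx0 : x ≠ 0 := by rintro rfl; simp at hx1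
  obtain ⟨ε, hε, δ, hδ, hxrs⟩ := exists_mem_posCone_of_mem_span_pair
    (notMem_span_of_inter_phat hPS hgen h3 hp hr hpr.symm hgc)
    (notMem_span_of_inter_phat hPS hgen h3 hp hs hps.symm hgc) hx.2 hx.1 hx0
  have hxw : ⟪x, w⟫ ≠ 0 := by
    obtain ⟨α, β, rfl⟩ := mem_span_pair.mp hx.1
    rw [inner_smul_add_smul_right hw.1 hw.2]
    rw [add_comm] at hx hx0
    exact coeff_ne_zero_of_mem (hgen.notMem_span_pair hp hr hs hpr hps hrs) hx.2 hx0
  rcases hxw.lt_or_gt with hneg | hpos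
  · exact ⟨-ε, neg_mem_signs hε, -δ, neg_mem_signs hδ,
      (crosses_halfCircleCurve_arcCurve_iff hPS hgen h3 hp hr hs hrs hw (neg_mem_signs hε)
        (neg_mem_signs hδ)).mpr ⟨-x, by rw [norm_neg, hx1], neg_mem hx.1,
          by rw [inner_neg_left]; linarith, neg_mem_posCone_smul hxrs⟩⟩
  · exact ⟨ε, hε, δ, hδ, (crosses_halfCircleCurve_arcCurve_iff hPS hgen h3 hp hr hs hrs hw hε
      hδ).mpr ⟨x, hx1, hx.1, hpos, hxrs⟩⟩

lemma signs_eq_of_crosses_halfCircleCurve (hPS : P ⊆ unitSphere) (hgen : GenPos P)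
    (h3 : 2 < P.ncard) {p r s w : E3} (hp : p ∈ P) (hr : r ∈ P) (hs : s ∈ P) (hpr : p ≠ r)
    (hps : p ≠ s) (hrs : r ≠ s) (hw : ‖w‖ = 1 ∧ ⟪p, w⟫ = 0) {ε δ ε₂ δ₂ : ℝ} (hε : ε ∈ signs)
    (hδ : δ ∈ signs) (hε₂ : ε₂ ∈ signs) (hδ₂ : δ₂ ∈ signs)
    (h : Crosses (halfCircleCurve p w) (arcCurve (ε • r) (δ • s)))
    (h₂ : Crosses (halfCircleCurve p w) (arcCurve (ε₂ • r) (δ₂ • s))) : ε = ε₂ ∧ δ = δ₂ := by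
  obtain ⟨x, hx1, hxU, hxw, hx⟩ :=
    (crosses_halfCircleCurve_arcCurve_iff hPS hgen h3 hp hr hs hrs hw hε hδ).mp h
  obtain ⟨y, hy1, hyU, hyw, hy⟩ :=
    (crosses_halfCircleCurve_arcCurve_iff hPS hgen h3 hp hr hs hrs hw hε₂ hδ₂).mp h₂
  rcases eq_or_eq_neg_of_mem_inf
    (finrank_span_pair (linearIndependent_pair_of_inner_eq_zero (hPS hp) hw.1 hw.2))
    (fun hle => hgen.notMem_span_pair hp hr hs hpr hps hrs (hle (subset_span (by simp))))
    ⟨hxU, mem_span_pair_of_mem_posCone_smul hx⟩ ⟨hyU, mem_span_pair_of_mem_posCone_smul hy⟩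
    hx1 hy1 with rfl | rfl
  · exact signs_eq_of_mem_posCone (hgen.linearIndependent_pair_s13 h3 hr hs hrs) hε hδ hε₂ hδ₂ hx hy
  · rw [inner_neg_left] at hyw
    linarith

end Crossings

section Counting

open Finset

variable {α : Type*} [DecidableEq α]

lemma card_filter_notMem_product {β : Type*} (A : Finset α) (B : Finset β) (F : β → Finset α)
    (m : ℕ) (hF : ∀ b ∈ B, F b ⊆ A ∧ #(F b) = m) :
    #{t ∈ A ×ˢ B | t.1 ∉ F t.2} = (#A - m) * #B := by
  rw [card_filter, sum_product_right, mul_comm, ← smul_eq_mul, ← sum_const]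
  refine sum_congr rfl fun b hb => ?_
  have hA : {a ∈ A | a ∈ F b} = F b := by
    rw [filter_mem_eq_inter, Finset.inter_eq_right.mpr (hF b hb).1]
  rw [← card_filter, filter_not, hA, card_sdiff_of_subset (hF b hb).1, (hF b hb).2]

def distinctTriples (A : Finset α) : Finset (α × α × α) :=
  {t ∈ A ×ˢ A.offDiag | t.1 ∉ ({t.2.1, t.2.2} : Finset α)}

def distinctQuadruples (A : Finset α) : Finset (α × α × α × α) :=
  {t ∈ A ×ˢ distinctTriples A | t.1 ∉ ({t.2.1, t.2.2.1, t.2.2.2} : Finset α)}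

@[simp]
lemma mem_distinctTriples {A : Finset α} {p r s : α} :
    (p, r, s) ∈ distinctTriples A ↔ p ∈ A ∧ r ∈ A ∧ s ∈ A ∧ p ≠ r ∧ p ≠ s ∧ r ≠ s := by
  simp [distinctTriples]
  tauto

@[simp]
lemma mem_distinctQuadruples {A : Finset α} {p q r s : α} :
    (p, q, r, s) ∈ distinctQuadruples A ↔ p ∈ A ∧ q ∈ A ∧ r ∈ A ∧ s ∈ A ∧
      p ≠ q ∧ p ≠ r ∧ p ≠ s ∧ q ≠ r ∧ q ≠ s ∧ r ≠ s := by
  simp [distinctQuadruples]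
  tauto

lemma card_distinctTriples (A : Finset α) :
    #(distinctTriples A) = #A * (#A - 1) * (#A - 2) := by
  have h := card_filter_notMem_product A A.offDiag (fun b => {b.1, b.2}) 2 fun b hb => by
    rw [Finset.mem_offDiag] at hb
    exact ⟨by simp [Finset.insert_subset_iff, hb.1, hb.2.1], card_pair hb.2.2⟩
  rw [distinctTriples, h, offDiag_card, ← Nat.mul_sub_one]
  ring

lemma card_distinctQuadruples (A : Finset α) :
    #(distinctQuadruples A) = #A * (#A - 1) * (#A - 2) * (#A - 3) := by
  have hF : ∀ b ∈ distinctTriples A, {b.1, b.2.1, b.2.2} ⊆ A ∧ #{b.1, b.2.1, b.2.2} = 3 := by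
    rintro ⟨q, r, s⟩ hb
    rw [mem_distinctTriples] at hb
    refine ⟨by simp [Finset.insert_subset_iff, hb.1, hb.2.1, hb.2.2.1], ?_⟩
    rw [card_insert_of_notMem (by simp [hb.2.2.2.1, hb.2.2.2.2.1]), card_pair hb.2.2.2.2.2]
  have h := card_filter_notMem_product A (distinctTriples A) (fun b => {b.1, b.2.1, b.2.2}) 3 hF
  rw [distinctQuadruples, h, card_distinctTriples]
  ring

lemma two_mul_card_image_sym2 (s : Finset (α × α)) (hswap : ∀ x ∈ s, x.swap ∈ s)
    (hdiag : ∀ x ∈ s, x.1 ≠ x.2) : 2 * #(s.image Sym2.mk.uncurry) = #s := by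
  rw [card_eq_sum_card_image (Sym2.mk.uncurry : α × α → _) s, mul_comm, ← smul_eq_mul,
    ← sum_const]
  refine sum_congr rfl fun z hz => ?_
  obtain ⟨x, hx, rfl⟩ := mem_image.mp hz
  have : {y ∈ s | Sym2.mk.uncurry y = Sym2.mk.uncurry x} = {x, x.swap} := by
    ext y
    simp only [mem_filter, Function.uncurry, Sym2.mk_eq_mk_iff, Finset.mem_insert,
      Finset.mem_singleton]
    constructor
    · exact fun h => h.2
    · rintro (rfl | rfl)
      · exact ⟨hx, Or.inl rfl⟩
      · exact ⟨hswap x hx, Or.inr rfl⟩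
  rw [this, card_pair fun h => hdiag x hx (Prod.ext_iff.mp h).1]

end Counting

section OrderedCrossings

open Finset

def orderedCrossings (D : Set Curve) : Set (Curve × Curve) :=
  {cd | cd.1 ∈ D ∧ cd.2 ∈ D ∧ cd.1 ≠ cd.2 ∧ Crosses cd.1 cd.2}

lemma swap_mem_orderedCrossings {D : Set Curve} {cd : Curve × Curve}
    (h : cd ∈ orderedCrossings D) : cd.swap ∈ orderedCrossings D :=
  ⟨h.2.1, h.1, h.2.2.1.symm, h.2.2.2.symm⟩

lemma crossingPairs_eq_image (D : Set Curve) :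
    crossingPairs D = Sym2.mk.uncurry '' orderedCrossings D := by
  ext pr
  constructor
  · rintro ⟨c, hc, d, hd, hne, hx, rfl⟩
    exact ⟨(c, d), ⟨hc, hd, hne, hx⟩, rfl⟩
  · rintro ⟨⟨c, d⟩, ⟨hc, hd, hne, hx⟩, rfl⟩
    exact ⟨c, hc, d, hd, hne, hx, rfl⟩

lemma orderedCrossings_finite {D : Set Curve} (hD : D.Finite) : (orderedCrossings D).Finite :=
  (hD.prod hD).subset fun _ h => ⟨h.1, h.2.1⟩

lemma two_mul_ncard_crossingPairs {D : Set Curve} {S : Finset (Curve × Curve)}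
    (hS : ↑S = orderedCrossings D) : 2 * (crossingPairs D).ncard = #S := by
  classical
  rw [crossingPairs_eq_image, ← hS, ← coe_image, Set.ncard_coe_finset]
  refine two_mul_card_image_sym2 S (fun cd h => ?_) fun cd h => ?_
  · rw [← mem_coe, hS] at h ⊢
    exact swap_mem_orderedCrossings h
  · rw [← mem_coe, hS] at h
    exact h.2.2.1

variable {P : Set E3} {v : E3 → E3}

lemma not_isHalfCircleOf_of_mem_orderedCrossings
    (hdisj : ∀ p ∈ P, ∀ q ∈ P, p ≠ q → halfCircle p (v p) ∩ halfCircle q (v q) = ∅)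
    {cd : Curve × Curve} (h : cd ∈ orderedCrossings (drawingCurves P v P))
    (h1 : IsHalfCircleOf P v cd.1) : ¬IsHalfCircleOf P v cd.2 := by
  obtain ⟨-, -, hne, x, hx1, hx2, -, -⟩ := h
  rintro ⟨q, hq, hcq⟩
  obtain ⟨p, hp, hcp⟩ := h1
  rw [hcp] at hne hx1
  rw [hcq] at hne hx2
  have hpq : p ≠ q := by rintro rfl; exact hne rfl
  exact (hdisj p hp q hq hpq).subset ⟨hx1, hx2⟩

open Classical in
lemma card_orderedCrossings_eq
    (hdisj : ∀ p ∈ P, ∀ q ∈ P, p ≠ q → halfCircle p (v p) ∩ halfCircle q (v q) = ∅)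
    {S : Finset (Curve × Curve)} (hS : ↑S = orderedCrossings (drawingCurves P v P)) :
    #S = #{cd ∈ S | ¬IsHalfCircleOf P v cd.1 ∧ ¬IsHalfCircleOf P v cd.2} +
      2 * #{cd ∈ S | IsHalfCircleOf P v cd.1} := by
  have hmem : ∀ cd, cd ∈ S ↔ cd ∈ orderedCrossings (drawingCurves P v P) := fun cd => by
    rw [← mem_coe, hS]
  have hswap : #{cd ∈ S | ¬IsHalfCircleOf P v cd.1 ∧ IsHalfCircleOf P v cd.2} =
      #{cd ∈ S | IsHalfCircleOf P v cd.1} := by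
    refine card_equiv (Equiv.prodComm _ _) fun cd => ?_
    simp only [mem_filter, Equiv.prodComm_apply, hmem, Prod.fst_swap]
    constructor
    · exact fun h => ⟨swap_mem_orderedCrossings h.1, h.2.2⟩
    · exact fun h => ⟨by simpa using swap_mem_orderedCrossings h.1,
        not_isHalfCircleOf_of_mem_orderedCrossings hdisj h.1 h.2, h.2⟩
  have h1 := card_filter_add_card_filter_not (s := S) (fun cd => IsHalfCircleOf P v cd.1)
  have h2 := card_filter_add_card_filter_not (s := {cd ∈ S | ¬IsHalfCircleOf P v cd.1})
    (fun cd => IsHalfCircleOf P v cd.2)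
  simp only [filter_filter] at h2
  omega

end OrderedCrossings

section ArcArcCount

open Finset Classical

variable {P : Finset E3} {v : E3 → E3}

lemma mem_orderedCrossings_arcCurve (hPS : (P : Set E3) ⊆ unitSphere)
    (hgen : GenPos (P : Set E3)) (h3 : 2 < (P : Set E3).ncard) {p q r s : E3} (hp : p ∈ P)
    (hq : q ∈ P) (hr : r ∈ P) (hs : s ∈ P) (hpq : p ≠ q) (hpr : p ≠ r) (hps : p ≠ s)
    (hrs : r ≠ s) {ε δ ε' δ' : ℝ} (hε : ε ∈ signs) (hδ : δ ∈ signs) (hε' : ε' ∈ signs)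
    (hδ' : δ' ∈ signs) (h : Crosses (arcCurve (ε • p) (δ • q)) (arcCurve (ε' • r) (δ' • s))) :
    (arcCurve (ε • p) (δ • q), arcCurve (ε' • r) (δ' • s)) ∈
        orderedCrossings (drawingCurves P v P) ∧
      ¬IsHalfCircleOf P v (arcCurve (ε • p) (δ • q)) ∧
      ¬IsHalfCircleOf P v (arcCurve (ε' • r) (δ' • s)) := by
  refine ⟨⟨(mem_drawingCurves_iff hPS hgen h3).mpr (Or.inl ⟨ε, hε, δ, hδ, p, hp, q, hq, hpq, rfl⟩),
    (mem_drawingCurves_iff hPS hgen h3).mpr (Or.inl ⟨ε', hε', δ', hδ', r, hr, s, hs, hrs, rfl⟩),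
    fun he => ?_, h⟩, ?_, ?_⟩
  · rcases eq_of_smul_pair_eq_smul_pair hPS hgen h3 hp hq hr hs hε hδ hε' hδ'
      (congrArg Prod.snd he) with h | h
    exacts [hpr h.2.1, hps h.2.1]
  · rintro ⟨t, ht, he⟩
    exact arcCurve_ne_halfCircleCurve hPS hgen h3 hp hq ht hpq hε hδ _ he
  · rintro ⟨t, ht, he⟩
    exact arcCurve_ne_halfCircleCurve hPS hgen h3 hr hs ht hrs hε' hδ' _ he

def LabelsArcCrossing : ℝ × E3 × E3 × E3 × E3 → Curve × Curve → Prop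
  | (ε, p, q, r, s), cd => ∃ δ ∈ signs, ∃ ε' ∈ signs, ∃ δ' ∈ signs,
      cd = (arcCurve (ε • p) (δ • q), arcCurve (ε' • r) (δ' • s))

lemma card_filter_labelsArcCrossing_eq_one (hPS : (P : Set E3) ⊆ unitSphere)
    (hgen : GenPos (P : Set E3)) (h3 : 2 < (P : Set E3).ncard) {S : Finset (Curve × Curve)}
    (hS : ↑S = orderedCrossings (drawingCurves P v P)) {x : ℝ × E3 × E3 × E3 × E3}
    (hx : x ∈ signs ×ˢ distinctQuadruples P) :
    #{cd ∈ {cd ∈ S | ¬IsHalfCircleOf P v cd.1 ∧ ¬IsHalfCircleOf P v cd.2} |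
      LabelsArcCrossing x cd} = 1 := by
  obtain ⟨ε, p, q, r, s⟩ := x
  simp only [mem_product, mem_distinctQuadruples] at hx
  obtain ⟨hε, hp, hq, hr, hs, hpq, hpr, hps, hqr, hqs, hrs⟩ := hx
  obtain ⟨δ, hδ, ε', hε', δ', hδ', hc⟩ :=
    exists_crosses_arcCurve hPS hgen h3 hp hq hr hs hpq hpr hps hqr hqs hrs hε
  rw [card_eq_one]
  refine ⟨(arcCurve (ε • p) (δ • q), arcCurve (ε' • r) (δ' • s)), Finset.ext fun cd => ?_⟩
  rw [Finset.mem_filter, Finset.mem_filter, Finset.mem_singleton]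
  simp only [LabelsArcCrossing]
  constructor
  · rintro ⟨⟨hcd, -⟩, δ₂, hδ₂, ε₂, hε₂, δ₂', hδ₂', rfl⟩
    rw [← mem_coe, hS] at hcd
    obtain ⟨rfl, rfl, rfl⟩ := signs_eq_of_crosses_arcCurve hPS hgen h3 hp hq hr hs hpq hpr hps hrs
      hε hδ hε' hδ' hδ₂ hε₂ hδ₂' hc hcd.2.2.2
    rfl
  · rintro rfl
    obtain ⟨hcd, hne⟩ := mem_orderedCrossings_arcCurve (v := v) hPS hgen h3 hp hq hr hs hpq hpr
      hps hrs hε hδ hε' hδ' hc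
    exact ⟨⟨by rwa [← mem_coe, hS], hne⟩, δ, hδ, ε', hε', δ', hδ', rfl⟩

lemma filter_labelsArcCrossing_eq (hPS : (P : Set E3) ⊆ unitSphere) (hgen : GenPos (P : Set E3))
    (h3 : 2 < (P : Set E3).ncard) {p q r s : E3} (hp : p ∈ P) (hq : q ∈ P) (hr : r ∈ P)
    (hs : s ∈ P) (hpq : p ≠ q) (hpr : p ≠ r) (hps : p ≠ s) (hqr : q ≠ r) (hqs : q ≠ s)
    (hrs : r ≠ s) {ε δ ε' δ' : ℝ} (hε : ε ∈ signs) (hδ : δ ∈ signs) (hε' : ε' ∈ signs)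
    (hδ' : δ' ∈ signs) :
    {x ∈ signs ×ˢ distinctQuadruples P |
      LabelsArcCrossing x (arcCurve (ε • p) (δ • q), arcCurve (ε' • r) (δ' • s))} =
      {(ε, p, q, r, s), (ε, p, q, s, r), (δ, q, p, r, s), (δ, q, p, s, r)} := by
  ext ⟨ε₁, p₁, q₁, r₁, s₁⟩
  rw [mem_filter]
  simp only [mem_product, mem_distinctQuadruples, LabelsArcCrossing, Finset.mem_insert,
    Finset.mem_singleton, Prod.mk.injEq]
  constructor
  · rintro ⟨⟨hε₁, hp₁, hq₁, hr₁, hs₁, -⟩, δ₁, hδ₁, ε₁', hε₁', δ₁', hδ₁', e₁, e₂⟩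
    rcases eq_of_smul_pair_eq_smul_pair hPS hgen h3 hp₁ hq₁ hp hq hε₁ hδ₁ hε hδ
      (congrArg Prod.snd e₁.symm) with
      ⟨rfl, rfl, -, rfl⟩ | ⟨rfl, rfl, -, rfl⟩ <;>
    rcases eq_of_smul_pair_eq_smul_pair hPS hgen h3 hr₁ hs₁ hr hs hε₁' hδ₁' hε' hδ'
      (congrArg Prod.snd e₂.symm) with
      ⟨-, rfl, -, rfl⟩ | ⟨-, rfl, -, rfl⟩ <;> simp
  · rintro (⟨rfl, rfl, rfl, rfl, rfl⟩ | ⟨rfl, rfl, rfl, rfl, rfl⟩ | ⟨rfl, rfl, rfl, rfl, rfl⟩ |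
      ⟨rfl, rfl, rfl, rfl, rfl⟩)
    · exact ⟨⟨hε, hp, hq, hr, hs, hpq, hpr, hps, hqr, hqs, hrs⟩, δ, hδ, ε', hε', δ', hδ', rfl, rfl⟩
    · exact ⟨⟨hε, hp, hq, hs, hr, hpq, hps, hpr, hqs, hqr, hrs.symm⟩,
        δ, hδ, δ', hδ', ε', hε', rfl, arcCurve_comm _ _⟩
    · exact ⟨⟨hδ, hq, hp, hr, hs, hpq.symm, hqr, hqs, hpr, hps, hrs⟩,
        ε, hε, ε', hε', δ', hδ', arcCurve_comm _ _, rfl⟩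
    · exact ⟨⟨hδ, hq, hp, hs, hr, hpq.symm, hqs, hqr, hps, hpr, hrs.symm⟩,
        ε, hε, δ', hδ', ε', hε', arcCurve_comm _ _, arcCurve_comm _ _⟩

lemma card_filter_labelsArcCrossing_eq_four (hPS : (P : Set E3) ⊆ unitSphere)
    (hgen : GenPos (P : Set E3)) (h3 : 2 < (P : Set E3).ncard) {S : Finset (Curve × Curve)}
    (hS : ↑S = orderedCrossings (drawingCurves P v P)) {cd : Curve × Curve}
    (hcd : cd ∈ {cd ∈ S | ¬IsHalfCircleOf P v cd.1 ∧ ¬IsHalfCircleOf P v cd.2}) :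
    #{x ∈ signs ×ˢ distinctQuadruples P | LabelsArcCrossing x cd} = 4 := by
  rw [mem_filter, ← mem_coe, hS] at hcd
  obtain ⟨⟨hc₁, hc₂, hne, hc⟩, hh₁, hh₂⟩ := hcd
  obtain ⟨ε, hε, δ, hδ, p, hp, q, hq, hpq, he₁⟩ :=
    ((mem_drawingCurves_iff hPS hgen h3).mp hc₁).resolve_right hh₁
  obtain ⟨ε', hε', δ', hδ', r, hr, s, hs, hrs, he₂⟩ :=
    ((mem_drawingCurves_iff hPS hgen h3).mp hc₂).resolve_right hh₂
  obtain ⟨c₁, c₂⟩ := cd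
  simp only at he₁ he₂ hne hc
  subst he₁ he₂
  obtain ⟨hpr, hps, hqr, hqs⟩ := distinct_of_crosses_arcCurve hPS hgen h3 hp hq hr hs hpq hrs
    hε hδ hε' hδ' hne hc
  rw [filter_labelsArcCrossing_eq hPS hgen h3 hp hq hr hs hpq hpr hps hqr hqs hrs hε hδ hε' hδ',
    card_insert_of_notMem, card_insert_of_notMem, card_pair] <;>
    simp [hpq, hpq.symm, hrs, hrs.symm]

lemma card_signs : #signs = 2 := card_pair (by norm_num)

lemma four_mul_card_arcArcCrossings (hPS : (P : Set E3) ⊆ unitSphere)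
    (hgen : GenPos (P : Set E3)) (h3 : 2 < (P : Set E3).ncard) {S : Finset (Curve × Curve)}
    (hS : ↑S = orderedCrossings (drawingCurves P v P)) :
    4 * #{cd ∈ S | ¬IsHalfCircleOf P v cd.1 ∧ ¬IsHalfCircleOf P v cd.2} =
      2 * #(distinctQuadruples P) := by
  have := card_mul_eq_card_mul LabelsArcCrossing
    (fun x hx => card_filter_labelsArcCrossing_eq_one hPS hgen h3 hS hx)
    (fun cd hcd => card_filter_labelsArcCrossing_eq_four hPS hgen h3 hS hcd)
  rw [card_product, card_signs, mul_one] at this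
  linarith

end ArcArcCount

section HalfCircleArcCount

open Finset Classical

variable {P : Finset E3} {v : E3 → E3}

def LabelsHalfCircleCrossing (v : E3 → E3) : E3 × E3 × E3 → Curve × Curve → Prop
  | (p, r, s), cd => ∃ ε ∈ signs, ∃ δ ∈ signs,
      cd = (halfCircleCurve p (v p), arcCurve (ε • r) (δ • s))

lemma card_filter_labelsHalfCircleCrossing_eq_one (hPS : (P : Set E3) ⊆ unitSphere)
    (hgen : GenPos (P : Set E3)) (h3 : 2 < (P : Set E3).ncard)
    (hv : ∀ p ∈ P, ‖v p‖ = 1 ∧ ⟪p, v p⟫ = 0)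
    (hgc : ∀ p ∈ P, ((span ℝ {p, v p} : Set E3) ∩ unitSphere) ∩ phat P = ({p, -p} : Set E3))
    {S : Finset (Curve × Curve)} (hS : ↑S = orderedCrossings (drawingCurves P v P))
    {x : E3 × E3 × E3} (hx : x ∈ distinctTriples P) :
    #{cd ∈ {cd ∈ S | IsHalfCircleOf P v cd.1} | LabelsHalfCircleCrossing v x cd} = 1 := by
  obtain ⟨p, r, s⟩ := x
  obtain ⟨hp, hr, hs, hpr, hps, hrs⟩ := mem_distinctTriples.mp hx
  obtain ⟨ε, hε, δ, hδ, hc⟩ :=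
    exists_crosses_halfCircleCurve hPS hgen h3 hp hr hs hpr hps hrs (hv p hp) (hgc p hp)
  rw [card_eq_one]
  refine ⟨(halfCircleCurve p (v p), arcCurve (ε • r) (δ • s)), Finset.ext fun cd => ?_⟩
  rw [Finset.mem_filter, Finset.mem_filter, Finset.mem_singleton]
  simp only [LabelsHalfCircleCrossing]
  constructor
  · rintro ⟨⟨hcd, -⟩, ε₂, hε₂, δ₂, hδ₂, rfl⟩
    rw [← mem_coe, hS] at hcd
    obtain ⟨rfl, rfl⟩ := signs_eq_of_crosses_halfCircleCurve hPS hgen h3 hp hr hs hpr hps hrs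
      (hv p hp) hε hδ hε₂ hδ₂ hc hcd.2.2.2
    rfl
  · rintro rfl
    have harc : arcCurve (ε • r) (δ • s) ∈ drawingCurves P v P :=
      (mem_drawingCurves_iff hPS hgen h3).mpr (Or.inl ⟨ε, hε, δ, hδ, r, hr, s, hs, hrs, rfl⟩)
    refine ⟨⟨?_, p, hp, rfl⟩, ε, hε, δ, hδ, rfl⟩
    rw [← mem_coe, hS]
    exact ⟨Or.inr ⟨p, hp, rfl⟩, harc,
      (arcCurve_ne_halfCircleCurve hPS hgen h3 hr hs hp hrs hε hδ _).symm, hc⟩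

lemma filter_labelsHalfCircleCrossing_eq (hPS : (P : Set E3) ⊆ unitSphere)
    (hgen : GenPos (P : Set E3)) (h3 : 2 < (P : Set E3).ncard) {p r s : E3} (hp : p ∈ P)
    (hr : r ∈ P) (hs : s ∈ P) (hpr : p ≠ r) (hps : p ≠ s) (hrs : r ≠ s) {ε δ : ℝ}
    (hε : ε ∈ signs) (hδ : δ ∈ signs) :
    {x ∈ distinctTriples P |
      LabelsHalfCircleCrossing v x (halfCircleCurve p (v p), arcCurve (ε • r) (δ • s))} =
      {(p, r, s), (p, s, r)} := by
  ext ⟨p₁, r₁, s₁⟩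
  rw [mem_filter]
  simp only [mem_distinctTriples, LabelsHalfCircleCrossing, Finset.mem_insert,
    Finset.mem_singleton, Prod.mk.injEq]
  constructor
  · rintro ⟨⟨hp₁, hr₁, hs₁, -⟩, ε₁, hε₁, δ₁, hδ₁, e₁, e₂⟩
    obtain rfl := halfCircleCurve_inj hPS hgen h3 hp hp₁ e₁
    rcases eq_of_smul_pair_eq_smul_pair hPS hgen h3 hr₁ hs₁ hr hs hε₁ hδ₁ hε hδ
      (congrArg Prod.snd e₂.symm) with
      ⟨-, rfl, -, rfl⟩ | ⟨-, rfl, -, rfl⟩ <;> simp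
  · rintro (⟨rfl, rfl, rfl⟩ | ⟨rfl, rfl, rfl⟩)
    · exact ⟨⟨hp, hr, hs, hpr, hps, hrs⟩, ε, hε, δ, hδ, rfl, rfl⟩
    · exact ⟨⟨hp, hs, hr, hps, hpr, hrs.symm⟩, δ, hδ, ε, hε, rfl, arcCurve_comm _ _⟩

lemma card_filter_labelsHalfCircleCrossing_eq_two (hPS : (P : Set E3) ⊆ unitSphere)
    (hgen : GenPos (P : Set E3)) (h3 : 2 < (P : Set E3).ncard)
    (hv : ∀ p ∈ P, ‖v p‖ = 1 ∧ ⟪p, v p⟫ = 0)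
    (hdisj : ∀ p ∈ P, ∀ q ∈ P, p ≠ q → halfCircle p (v p) ∩ halfCircle q (v q) = ∅)
    (hgc : ∀ p ∈ P, ((span ℝ {p, v p} : Set E3) ∩ unitSphere) ∩ phat P = ({p, -p} : Set E3))
    {S : Finset (Curve × Curve)} (hS : ↑S = orderedCrossings (drawingCurves P v P))
    {cd : Curve × Curve} (hcd : cd ∈ {cd ∈ S | IsHalfCircleOf P v cd.1}) :
    #{x ∈ distinctTriples P | LabelsHalfCircleCrossing v x cd} = 2 := by
  rw [mem_filter, ← mem_coe, hS] at hcd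
  obtain ⟨hcd, hh₁⟩ := hcd
  have hh₂ := not_isHalfCircleOf_of_mem_orderedCrossings hdisj hcd hh₁
  obtain ⟨-, hc₂, -, hc⟩ := hcd
  obtain ⟨p, hp, he₁⟩ := hh₁
  obtain ⟨ε, hε, δ, hδ, r, hr, s, hs, hrs, he₂⟩ :=
    ((mem_drawingCurves_iff hPS hgen h3).mp hc₂).resolve_right hh₂
  obtain ⟨c₁, c₂⟩ := cd
  simp only at he₁ he₂ hc
  subst he₁ he₂
  obtain ⟨hpr, hps⟩ := ne_of_crosses_halfCircleCurve hPS hgen h3 hp hr hs hrs (hv p hp)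
    (hgc p hp) hε hδ hc
  rw [filter_labelsHalfCircleCrossing_eq hPS hgen h3 hp hr hs hpr hps hrs hε hδ,
    card_pair (by simp [hrs])]

lemma two_mul_card_halfCircleArcCrossings (hPS : (P : Set E3) ⊆ unitSphere)
    (hgen : GenPos (P : Set E3)) (h3 : 2 < (P : Set E3).ncard)
    (hv : ∀ p ∈ P, ‖v p‖ = 1 ∧ ⟪p, v p⟫ = 0)
    (hdisj : ∀ p ∈ P, ∀ q ∈ P, p ≠ q → halfCircle p (v p) ∩ halfCircle q (v q) = ∅)
    (hgc : ∀ p ∈ P, ((span ℝ {p, v p} : Set E3) ∩ unitSphere) ∩ phat P = ({p, -p} : Set E3))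
    {S : Finset (Curve × Curve)} (hS : ↑S = orderedCrossings (drawingCurves P v P)) :
    2 * #{cd ∈ S | IsHalfCircleOf P v cd.1} = #(distinctTriples P) := by
  have := card_mul_eq_card_mul (LabelsHalfCircleCrossing v)
    (fun x hx => card_filter_labelsHalfCircleCrossing_eq_one hPS hgen h3 hv hgc hS hx)
    (fun cd hcd => card_filter_labelsHalfCircleCrossing_eq_two hPS hgen h3 hv hdisj hgc hS hcd)
  linarith

end HalfCircleArcCount

lemma Hfun_two_mul (k : ℕ) : Hfun (2 * k) = (k : ℚ) * ((k : ℚ) - 1) ^ 2 * ((k : ℚ) - 2) / 4 := by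
  rcases Nat.lt_or_ge k 2 with hk | hk
  · interval_cases k <;> norm_num [Hfun]
  · rw [Hfun, show 2 * k / 2 = k by omega, show (2 * k - 1) / 2 = k - 1 by omega,
      show (2 * k - 2) / 2 = k - 1 by omega, show (2 * k - 3) / 2 = k - 2 by omega,
      Nat.cast_sub (by omega : 1 ≤ k), Nat.cast_sub hk]
    push_cast
    ring

theorem antipodal_drawing_is_Hill_drawing
    (k : ℕ) (hk : 3 ≤ k) (P : Set E3) (hPS : P ⊆ unitSphere)
    (hPfin : P.Finite) (hcard : P.ncard = k) (hgen : GenPos P)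
    (v : E3 → E3) (hv : ∀ p ∈ P, ‖v p‖ = 1 ∧ ⟪p, v p⟫ = 0)
    (hdisj : ∀ p ∈ P, ∀ q ∈ P, p ≠ q →
      halfCircle p (v p) ∩ halfCircle q (v q) = ∅)
    (hgc : ∀ p ∈ P, ((Submodule.span ℝ {p, v p} : Set E3) ∩ unitSphere) ∩ phat P =
      ({p, -p} : Set E3)) :
    (Set.ncard (crossingPairs (drawingCurves P v P)) : ℚ) =
      (k : ℚ) * ((k : ℚ) - 1) ^ 2 * ((k : ℚ) - 2) / 4 ∧
    (k : ℚ) * ((k : ℚ) - 1) ^ 2 * ((k : ℚ) - 2) / 4 = Hfun (2 * k) := by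
  refine ⟨?_, (Hfun_two_mul k).symm⟩
  obtain ⟨S, hS⟩ :=
    (orderedCrossings_finite (drawingCurves_finite (v := v) hPfin)).exists_finset_coe
  obtain ⟨P, rfl⟩ := hPfin.exists_finset_coe
  rw [Set.ncard_coe_finset] at hcard
  have h3 : 2 < (P : Set E3).ncard := by rw [Set.ncard_coe_finset]; omega
  have hpairs := two_mul_ncard_crossingPairs hS
  have hsplit := card_orderedCrossings_eq hdisj hS
  have harcs := four_mul_card_arcArcCrossings hPS hgen h3 hS
  have hhalf := two_mul_card_halfCircleArcCrossings hPS hgen h3 hv hdisj hgc hS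
  rw [card_distinctQuadruples, hcard] at harcs
  rw [card_distinctTriples, hcard] at hhalf
  qify [show 1 ≤ k by omega, show 2 ≤ k by omega, hk] at hpairs hsplit harcs hhalf
  linear_combination (hpairs + hsplit + harcs / 4 + hhalf) / 2
end
end
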